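/- arXiv:2602.03946 — 13 statements merged into one kernel-verified Lean document; each statement's English description precedes it below -/
import Mathlib

section
/- For g ∈ {3,4,6}, the function h_2(x) = -(g-1)·sin(2a(x)) + sin(2(g-1)·a(x)), with a(x) = (2/g)·arctan(e^x), is negative for all x ∈ ℝ and strictly decreasing. -/
open Real Filter Topology

noncomputable def aa (g x : ℝ) : ℝ := (2 / g) * Real.arctan (Real.exp x)

noncomputable def h1 (g x : ℝ) : ℝ :=
  (g - 1) * Real.cos (2 * aa g x) + Real.cos (2 * (g - 1) * aa g x)

noncomputable def h2 (g x : ℝ) : ℝ :=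
  -(g - 1) * Real.sin (2 * aa g x) + Real.sin (2 * (g - 1) * aa g x)

/-- The (g,m)-ODE in the variable x. -/
def IsGMSol (g m : ℝ) (r : ℝ → ℝ) : Prop :=
  ∀ x : ℝ, deriv (deriv r) x =
    (m - 1) * Real.tanh x * deriv r x +
      (m / (2 * g)) * ((g - 1) * Real.sin (2 * r x - 2 * aa g x) +
        Real.sin (2 * r x + 2 * (g - 1) * aa g x))

/-- The Lyapunov function W associated to a solution r. -/
noncomputable def W (g : ℝ) (r : ℝ → ℝ) (x : ℝ) : ℝ :=
  (1 / 2) * (deriv r x) ^ 2 - (1 / (2 * g)) * h1 g x * (Real.sin (r x)) ^ 2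
    - (1 / (2 * g)) * h2 g x * (Real.sin (r x - 3 * Real.pi / 4)) ^ 2

lemma aux_hasDerivAt_aa (g x : ℝ) :
    HasDerivAt (aa g) (2 / g * (Real.exp x / (1 + Real.exp x ^ 2))) x := by
  have h := ((Real.hasDerivAt_arctan (Real.exp x)).comp x (Real.hasDerivAt_exp x)).const_mul (2 / g)
  refine h.congr_deriv ?_
  ring

lemma aux_hasDerivAt_h2 (g x : ℝ) :
    HasDerivAt (h2 g)
      (2 * (g - 1) * (2 / g * (Real.exp x / (1 + Real.exp x ^ 2))) *
        (Real.cos (2 * (g - 1) * aa g x) - Real.cos (2 * aa g x))) x := by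
  have ha := aux_hasDerivAt_aa g x
  have hA := ((Real.hasDerivAt_sin (2 * aa g x)).comp x (ha.const_mul 2)).const_mul (-(g - 1))
  have hB := (Real.hasDerivAt_sin (2 * (g - 1) * aa g x)).comp x (ha.const_mul (2 * (g - 1)))
  have hAB := hA.add hB
  have hfun : h2 g = fun x => -(g - 1) * Real.sin (2 * aa g x) + Real.sin (2 * (g - 1) * aa g x) :=
    rfl
  rw [hfun]
  refine hAB.congr_deriv ?_
  ring

lemma aux_deriv_h2_neg (g : ℝ) (hg : 2 < g) (x : ℝ) : deriv (h2 g) x < 0 := by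
  rw [(aux_hasDerivAt_h2 g x).deriv]
  have hg0 : (0 : ℝ) < g := by linarith
  set θ := Real.arctan (Real.exp x) with hθdef
  have hθ1 : 0 < θ := by
    have := Real.arctan_strictMono (Real.exp_pos x)
    rw [Real.arctan_zero] at this
    exact this
  have hθ2 : θ < π / 2 := Real.arctan_lt_pi_div_two _
  have hcos : Real.cos (2 * (g - 1) * aa g x) - Real.cos (2 * aa g x) =
      -2 * Real.sin (g * aa g x) * Real.sin ((g - 2) * aa g x) := by
    rw [Real.cos_sub_cos]
    congr 2 <;> ring
  have haa : aa g x = 2 / g * θ := rfl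
  have h1 : g * aa g x = 2 * θ := by
    rw [haa]; field_simp
  have h2 : (g - 2) * aa g x = (g - 2) * (2 / g) * θ := by rw [haa]; ring
  have hs1 : 0 < Real.sin (g * aa g x) := by
    rw [h1]
    exact Real.sin_pos_of_pos_of_lt_pi (by linarith) (by linarith [Real.pi_pos])
  have hg2' : (0:ℝ) < g - 2 := by linarith
  have hs2 : 0 < Real.sin ((g - 2) * aa g x) := by
    rw [h2]
    apply Real.sin_pos_of_pos_of_lt_pi
    · have h2g : (0:ℝ) < 2 / g := by positivity
      exact mul_pos (mul_pos hg2' h2g) hθ1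
    · have h2g : (0:ℝ) < 2 / g := by positivity
      have hlt : (g - 2) * (2 / g) * θ < (g - 2) * (2 / g) * (π / 2) :=
        mul_lt_mul_of_pos_left hθ2 (mul_pos hg2' h2g)
      have heq : (g - 2) * (2 / g) * (π / 2) = (g - 2) * π / g := by ring
      have hfin : (g - 2) * π / g < π := by
        rw [div_lt_iff₀ hg0]
        nlinarith [Real.pi_pos]
      linarith [heq ▸ hlt]
  rw [hcos]
  have hpos : 0 < 2 * (g - 1) * (2 / g * (Real.exp x / (1 + Real.exp x ^ 2))) := by
    have := Real.exp_pos x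
    have hg1 : (0:ℝ) < g - 1 := by linarith
    positivity
  have hkey : 2 * (g - 1) * (2 / g * (Real.exp x / (1 + Real.exp x ^ 2))) *
      (-2 * Real.sin (g * aa g x) * Real.sin ((g - 2) * aa g x)) =
      -(2 * (2 * (g - 1) * (2 / g * (Real.exp x / (1 + Real.exp x ^ 2))) *
        (Real.sin (g * aa g x) * Real.sin ((g - 2) * aa g x)))) := by ring
  rw [hkey]
  have := mul_pos hpos (mul_pos hs1 hs2)
  linarith

lemma aux_tendsto_h2_atBot (g : ℝ) : Tendsto (h2 g) atBot (𝓝 0) := by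
  have haa : Tendsto (aa g) atBot (𝓝 0) := by
    have he : Tendsto Real.exp atBot (𝓝 0) := Real.tendsto_exp_atBot
    have h := ((Real.continuous_arctan.tendsto 0).comp he).const_mul (2 / g)
    rw [Real.arctan_zero, mul_zero] at h
    exact h
  have hc : Continuous (fun t : ℝ => -(g - 1) * Real.sin (2 * t) + Real.sin (2 * (g - 1) * t)) :=
    by continuity
  have h := (hc.tendsto 0).comp haa
  have hfun : h2 g = (fun t : ℝ => -(g - 1) * Real.sin (2 * t) + Real.sin (2 * (g - 1) * t)) ∘ aa g := rfl
  rw [hfun]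
  convert h using 2
  simp

theorem stmt1 (g : ℝ) (hg : g ∈ ({3, 4, 6} : Set ℝ)) :
    (∀ x : ℝ, h2 g x < 0) ∧ StrictAnti (h2 g) := by
  have hg2 : 2 < g := by
    simp only [Set.mem_insert_iff, Set.mem_singleton_iff] at hg
    rcases hg with h | h | h <;> rw [h] <;> norm_num
  have hanti : StrictAnti (h2 g) := strictAnti_of_deriv_neg (aux_deriv_h2_neg g hg2)
  have hle : ∀ y : ℝ, h2 g y ≤ 0 := by
    intro y
    refine ge_of_tendsto (aux_tendsto_h2_atBot g) ?_
    filter_upwards [eventually_lt_atBot y] with z hz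
    exact (hanti hz).le
  refine ⟨fun x => ?_, hanti⟩
  have := hanti (show x - 1 < x by linarith)
  linarith [hle (x - 1)]
end

section
/- For g = 3, the function h_1(x) = 2·cos(2a(x)) + cos(4a(x)), with a(x) = (2/3)·arctan(e^x), is strictly decreasing, and there exists a unique z_0 > 0 such that h_1(z_0) = 0, h_1(x) > 0 for x < z_0, and h_1(x) < 0 for x > z_0. -/
open Real Filter Topology

noncomputable def ff (t : ℝ) : ℝ := 2 * Real.cos t + Real.cos (2 * t)

lemma h1_eq (x : ℝ) : h1 3 x = ff (2 * aa 3 x) := by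
  unfold h1 ff
  norm_num
  ring_nf

lemma ff_deriv (t : ℝ) : HasDerivAt ff (-2 * Real.sin t - 2 * Real.sin (2*t)) t := by
  have h1 : HasDerivAt (fun t => 2 * Real.cos t) (2 * (-Real.sin t)) t :=
    (Real.hasDerivAt_cos t).const_mul 2
  have h2 : HasDerivAt (fun t : ℝ => Real.cos (2 * t)) (-Real.sin (2*t) * 2) t := by
    have := (Real.hasDerivAt_cos (2*t)).comp t ((hasDerivAt_id t).const_mul 2)
    exact this.congr_deriv (by ring)
  exact (h1.add h2).congr_deriv (by ring)

lemma ff_anti : StrictAntiOn ff (Set.Icc 0 (2*π/3)) := by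
  apply strictAntiOn_of_deriv_neg (convex_Icc _ _)
  · exact (Continuous.continuousOn (by unfold ff; continuity))
  · intro t ht
    rw [interior_Icc] at ht
    rw [(ff_deriv t).deriv]
    have hs : 0 < Real.sin t := Real.sin_pos_of_pos_of_lt_pi ht.1 (by
      have := ht.2; nlinarith [Real.pi_pos])
    have hc : Real.cos t > -1/2 := by
      have h23 : Real.cos (2*π/3) = -1/2 := by
        have : (2*π/3) = π - π/3 := by ring
        rw [this, Real.cos_pi_sub, Real.cos_pi_div_three]; norm_num
      calc Real.cos t > Real.cos (2*π/3) := by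
            apply Real.cos_lt_cos_of_nonneg_of_le_pi ht.1.le (by nlinarith [Real.pi_pos]) ht.2
        _ = -1/2 := h23
    have : Real.sin (2*t) = 2 * Real.sin t * Real.cos t := Real.sin_two_mul t
    rw [this]
    nlinarith

lemma aa_mono : StrictMono (fun x => 2 * aa 3 x) := by
  intro x y hxy
  unfold aa
  have := Real.arctan_strictMono (Real.exp_lt_exp.mpr hxy)
  norm_num
  linarith

lemma aa_mem (x : ℝ) : 2 * aa 3 x ∈ Set.Icc (0:ℝ) (2*π/3) := by
  unfold aa
  have h1 : 0 < Real.arctan (Real.exp x) := by { rw [show (0:ℝ) = Real.arctan 0 from (Real.arctan_zero).symm]; exact Real.arctan_strictMono (Real.exp_pos x) }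
  have h2 : Real.arctan (Real.exp x) < π/2 := Real.arctan_lt_pi_div_two _
  constructor <;> [nlinarith; nlinarith]

lemma h1_anti : StrictAnti (h1 3) := by
  intro x y hxy
  rw [h1_eq, h1_eq]
  exact ff_anti (aa_mem x) (aa_mem y) (aa_mono hxy)

lemma h1_zero : h1 3 0 = 1/2 := by
  unfold h1 aa
  rw [Real.exp_zero, Real.arctan_one]
  norm_num
  rw [show (2:ℝ) * (2/3 * (π/4)) = π/3 by ring, show (4:ℝ) * (2/3 * (π/4)) = π - π/3 by ring,
    Real.cos_pi_sub, Real.cos_pi_div_three]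
  norm_num

lemma h1_cont : Continuous (h1 3) := by
  have : Continuous (fun x => 2 * aa 3 x) := by unfold aa; continuity
  have hff : Continuous ff := by unfold ff; continuity
  have := hff.comp this
  convert this using 1
  ext x; exact h1_eq x

lemma h1_lim : Tendsto (h1 3) atTop (𝓝 (-3/2)) := by
  have h1 : Tendsto (fun x => 2 * aa 3 x) atTop (𝓝 (2*π/3)) := by
    unfold aa
    have := (Real.tendsto_arctan_atTop.mono_right nhdsWithin_le_nhds).comp Real.tendsto_exp_atTop
    have h2 := this.const_mul (2 * (2/3 : ℝ))
    convert h2 using 2 with x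
    · simp [Function.comp]; ring
    · ring
  have hff : Continuous ff := by unfold ff; continuity
  have := (hff.tendsto _).comp h1
  have hval : ff (2*π/3) = -3/2 := by
    unfold ff
    rw [show (2:ℝ)*π/3 = π - π/3 by ring, Real.cos_pi_sub,
      show (2:ℝ) * (π - π/3) = π + π/3 by ring]
    rw [show π + π/3 = π/3 + π by ring, Real.cos_add_pi, Real.cos_pi_div_three]
    norm_num
  rw [hval] at this
  convert this using 1
  ext x; exact h1_eq x

theorem stmt3 :
    StrictAnti (h1 3) ∧
      ∃! z₀ : ℝ, 0 < z₀ ∧ h1 3 z₀ = 0 ∧ (∀ x : ℝ, x < z₀ → 0 < h1 3 x) ∧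
        (∀ x : ℝ, z₀ < x → h1 3 x < 0) := by
  refine ⟨h1_anti, ?_⟩
  -- find b with h1 3 b < 0
  obtain ⟨b, hb⟩ : ∃ b, h1 3 b < 0 := by
    have := h1_lim.eventually (gt_mem_nhds (by norm_num : (-3/2 : ℝ) < 0))
    obtain ⟨a, ha⟩ := Filter.eventually_atTop.mp this
    exact ⟨a, ha a le_rfl⟩
  have hb0 : 0 < b := by
    by_contra h
    push_neg at h
    rcases eq_or_lt_of_le h with h | h
    · rw [h, h1_zero] at hb; norm_num at hb
    · have := h1_anti h; rw [h1_zero] at this; linarith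
  -- IVT
  have hivt : (0:ℝ) ∈ Set.Ioo (h1 3 b) (h1 3 0) := ⟨hb, by rw [h1_zero]; norm_num⟩
  obtain ⟨z₀, hz₀mem, hz₀⟩ := intermediate_value_Ioo' hb0.le h1_cont.continuousOn hivt
  refine ⟨z₀, ⟨hz₀mem.1, hz₀, ?_, ?_⟩, ?_⟩
  · intro x hx
    have := h1_anti hx
    rw [hz₀] at this; exact this
  · intro x hx
    have := h1_anti hx
    rw [hz₀] at this; exact this
  · rintro y ⟨-, hy, -, -⟩
    exact h1_anti.injective (hy.trans hz₀.symm)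
end

section
/- For g = 4, the function h_1(x) = 3·cos(2a(x)) + cos(6a(x)), with a(x) = (1/2)·arctan(e^x), is positive for all x ∈ ℝ and strictly decreasing. -/
open Real Filter Topology

lemma h1_eq_s4 (x : ℝ) : h1 4 x = 4 * Real.cos (Real.arctan (Real.exp x)) ^ 3 := by
  have h2a : 2 * aa 4 x = Real.arctan (Real.exp x) := by unfold aa; ring
  unfold h1
  rw [show (2:ℝ) * (4 - 1) * aa 4 x = 3 * (2 * aa 4 x) by ring, h2a, Real.cos_three_mul]
  ring

lemma h1_eq' (x : ℝ) : h1 4 x = 4 * (1 / Real.sqrt (1 + Real.exp x ^ 2)) ^ 3 := by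
  rw [h1_eq_s4, Real.cos_arctan]

theorem stmt4 : (∀ x : ℝ, 0 < h1 4 x) ∧ StrictAnti (h1 4) := by
  constructor
  · intro x
    rw [h1_eq_s4]
    have := Real.cos_arctan_pos (Real.exp x)
    positivity
  · intro x y hxy
    rw [h1_eq' x, h1_eq' y]
    have hx : (0:ℝ) < Real.sqrt (1 + Real.exp x ^ 2) := by positivity
    have hy : (0:ℝ) < Real.sqrt (1 + Real.exp y ^ 2) := by positivity
    have hlt : Real.sqrt (1 + Real.exp x ^ 2) < Real.sqrt (1 + Real.exp y ^ 2) := by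
      apply Real.sqrt_lt_sqrt (by positivity)
      have := Real.exp_lt_exp.mpr hxy
      nlinarith [Real.exp_pos x]
    have : 1 / Real.sqrt (1 + Real.exp y ^ 2) < 1 / Real.sqrt (1 + Real.exp x ^ 2) :=
      one_div_lt_one_div_of_lt hx hlt
    have h0 : (0:ℝ) < 1 / Real.sqrt (1 + Real.exp y ^ 2) := by positivity
    have h3 := pow_lt_pow_left₀ this h0.le (n := 3) (by norm_num)
    linarith
end

section
/- For g = 6, the function h_1(x) = 5·cos(2a(x)) + cos(10a(x)), with a(x) = (1/3)·arctan(e^x), is positive for all x ∈ ℝ; moreover there exists a unique x_0 > 0 with h_1'(x_0) = 0, h_1'(x) < 0 for x < x_0, and h_1'(x) > 0 for x > x_0. -/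
open Real Filter Topology

lemma h1_six (x : ℝ) : h1 6 x = 5 * Real.cos ((2/3) * Real.arctan (Real.exp x))
    + Real.cos ((10/3) * Real.arctan (Real.exp x)) := by
  unfold h1 aa; norm_num; ring_nf

lemma hasDerivAt_h1_six (x : ℝ) : HasDerivAt (h1 6)
    (-(20/3) * (Real.exp x / (1 + Real.exp x ^ 2)) *
      (Real.sin (2 * Real.arctan (Real.exp x)) *
        Real.cos ((4/3) * Real.arctan (Real.exp x)))) x := by
  have hA : HasDerivAt (fun x : ℝ => Real.arctan (Real.exp x))
      (1 / (1 + Real.exp x ^ 2) * Real.exp x) x :=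
    (Real.hasDerivAt_arctan (Real.exp x)).comp x (Real.hasDerivAt_exp x)
  have h1' : HasDerivAt (fun x : ℝ => 5 * Real.cos ((2/3) * Real.arctan (Real.exp x))
      + Real.cos ((10/3) * Real.arctan (Real.exp x)))
      (5 * (-Real.sin ((2/3) * Real.arctan (Real.exp x)) *
          ((2/3) * (1 / (1 + Real.exp x ^ 2) * Real.exp x)))
        + (-Real.sin ((10/3) * Real.arctan (Real.exp x)) *
          ((10/3) * (1 / (1 + Real.exp x ^ 2) * Real.exp x)))) x :=
    (((hA.const_mul (2/3)).cos).const_mul 5).add ((hA.const_mul (10/3)).cos)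
  have heq : (fun x : ℝ => 5 * Real.cos ((2/3) * Real.arctan (Real.exp x))
      + Real.cos ((10/3) * Real.arctan (Real.exp x))) = h1 6 := by
    funext y; rw [h1_six]
  rw [heq] at h1'
  convert h1' using 1
  set A := Real.arctan (Real.exp x)
  have key : Real.sin ((2/3) * A) + Real.sin ((10/3) * A)
      = 2 * (Real.sin (2 * A) * Real.cos ((4/3) * A)) := by
    have e1 : (10/3 : ℝ) * A = 2 * A + (4/3) * A := by ring
    have e2 : (2/3 : ℝ) * A = 2 * A - (4/3) * A := by ring
    rw [e1, e2, Real.sin_add, Real.sin_sub]; ring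
  linear_combination ((10/3) * (1/(1+Real.exp x^2)*Real.exp x)) * key

lemma deriv_h1_six (x : ℝ) : deriv (h1 6) x =
    -(20/3) * (Real.exp x / (1 + Real.exp x ^ 2)) *
      (Real.sin (2 * Real.arctan (Real.exp x)) *
        Real.cos ((4/3) * Real.arctan (Real.exp x))) :=
  (hasDerivAt_h1_six x).deriv

lemma arctan_exp_pos (x : ℝ) : 0 < Real.arctan (Real.exp x) := by
  have := Real.arctan_strictMono (Real.exp_pos x)
  rwa [Real.arctan_zero] at this

lemma sin_two_arctan_exp_pos (x : ℝ) : 0 < Real.sin (2 * Real.arctan (Real.exp x)) := by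
  apply Real.sin_pos_of_pos_of_lt_pi
  · linarith [arctan_exp_pos x]
  · have := Real.arctan_lt_pi_div_two (Real.exp x)
    linarith

theorem stmt5 :
    (∀ x : ℝ, 0 < h1 6 x) ∧
      ∃! x₀ : ℝ, 0 < x₀ ∧ deriv (h1 6) x₀ = 0 ∧
        (∀ x : ℝ, x < x₀ → deriv (h1 6) x < 0) ∧
        (∀ x : ℝ, x₀ < x → 0 < deriv (h1 6) x) := by
  have hpi := Real.pi_gt_three
  constructor
  · intro x
    rw [h1_six]
    have hA0 := arctan_exp_pos x
    have hA2 := Real.arctan_lt_pi_div_two (Real.exp x)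
    have hcos : Real.cos (Real.pi / 3) < Real.cos ((2/3) * Real.arctan (Real.exp x)) := by
      apply Real.cos_lt_cos_of_nonneg_of_le_pi (by linarith) (by linarith) (by linarith)
    rw [Real.cos_pi_div_three] at hcos
    have hbd := Real.neg_one_le_cos ((10/3) * Real.arctan (Real.exp x))
    linarith
  · set x₀ := Real.log (Real.tan (3 * Real.pi / 8)) with hx₀
    have htanpos : (1 : ℝ) < Real.tan (3 * Real.pi / 8) := by
      have h1 : Real.tan (Real.pi / 4) < Real.tan (3 * Real.pi / 8) :=
        Real.tan_lt_tan_of_lt_of_lt_pi_div_two (by linarith) (by linarith) (by linarith)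
      rwa [Real.tan_pi_div_four] at h1
    have hexp : Real.exp x₀ = Real.tan (3 * Real.pi / 8) :=
      Real.exp_log (by linarith)
    have hAx₀ : Real.arctan (Real.exp x₀) = 3 * Real.pi / 8 := by
      rw [hexp]; exact Real.arctan_tan (by linarith) (by linarith)
    -- key sign facts
    have hneg : ∀ x : ℝ, x < x₀ → deriv (h1 6) x < 0 := by
      intro x hx
      rw [deriv_h1_six]
      have hAlt : Real.arctan (Real.exp x) < 3 * Real.pi / 8 := by
        rw [← hAx₀]; exact Real.arctan_strictMono (Real.exp_lt_exp.2 hx)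
      have hcos : 0 < Real.cos ((4/3) * Real.arctan (Real.exp x)) := by
        apply Real.cos_pos_of_mem_Ioo
        constructor
        · have := arctan_exp_pos x; linarith
        · linarith
      have hD : 0 < Real.exp x / (1 + Real.exp x ^ 2) := by positivity
      nlinarith [mul_pos hD (mul_pos (sin_two_arctan_exp_pos x) hcos)]
    have hpos : ∀ x : ℝ, x₀ < x → 0 < deriv (h1 6) x := by
      intro x hx
      rw [deriv_h1_six]
      have hAgt : 3 * Real.pi / 8 < Real.arctan (Real.exp x) := by
        rw [← hAx₀]; exact Real.arctan_strictMono (Real.exp_lt_exp.2 hx)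
      have hA2 := Real.arctan_lt_pi_div_two (Real.exp x)
      have hcos : Real.cos ((4/3) * Real.arctan (Real.exp x)) < 0 := by
        apply Real.cos_neg_of_pi_div_two_lt_of_lt (by linarith) (by linarith)
      have hD : 0 < Real.exp x / (1 + Real.exp x ^ 2) := by positivity
      nlinarith [mul_pos hD (mul_pos (sin_two_arctan_exp_pos x) (neg_pos.mpr hcos))]
    have hzero : deriv (h1 6) x₀ = 0 := by
      rw [deriv_h1_six, hAx₀]
      have : (4/3 : ℝ) * (3 * Real.pi / 8) = Real.pi / 2 := by ring
      rw [this, Real.cos_pi_div_two]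
      ring
    have hx₀pos : 0 < x₀ := Real.log_pos htanpos
    refine ⟨x₀, ⟨hx₀pos, hzero, hneg, hpos⟩, ?_⟩
    intro y ⟨_, hy0, _, _⟩
    by_contra hne
    rcases lt_or_gt_of_ne hne with h | h
    · exact absurd hy0 (hneg y h).ne
    · exact absurd hy0 (hpos y h).ne'
end

section
/- If r: ℝ → ℝ solves the (g,m)-differential equation r''(x) = (m-1)·tanh(x)·r'(x) + (m/(2g))·[(g-1)·sin(2r(x)-2a(x)) + sin(2r(x)+2(g-1)·a(x))] with a(x) = (2/g)·arctan(e^x), then for any j ∈ ℤ the function x ↦ 2y_j - r(-x), where y_j = (jg+1)·π/(2g), also solves the same differential equation. -/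
open Real Filter Topology

lemma aa_neg (g : ℝ) (x : ℝ) : aa g (-x) = 2 / g * (Real.pi / 2) - aa g x := by
  unfold aa
  rw [Real.exp_neg, Real.arctan_inv_of_pos (Real.exp_pos x)]
  ring

theorem stmt6 (g m : ℕ) (hg : g ∈ ({1, 2, 3, 4, 6} : Set ℕ)) (hm : 1 ≤ m)
    (r : ℝ → ℝ) (hr : ContDiff ℝ 2 r) (hODE : IsGMSol (g : ℝ) (m : ℝ) r)
    (j : ℤ) :
    IsGMSol (g : ℝ) (m : ℝ)
      (fun x => 2 * (((j : ℝ) * g + 1) * Real.pi / (2 * g)) - r (-x)) := by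
  have hgpos : (0:ℝ) < (g:ℝ) := by
    have : 1 ≤ g := by
      simp only [Set.mem_insert_iff, Set.mem_singleton_iff] at hg
      rcases hg with h|h|h|h|h <;> omega
    exact_mod_cast this
  have hg0 : (g:ℝ) ≠ 0 := ne_of_gt hgpos
  have hd1 : Differentiable ℝ r := hr.differentiable (by norm_num)
  have hd2 : Differentiable ℝ (deriv r) := by
    have h : ContDiff ℝ ((1:ℕ∞)+1) r := by exact_mod_cast hr
    rw [contDiff_succ_iff_deriv] at h
    exact h.2.2.differentiable (by norm_num)
  set c : ℝ := 2 * (((j : ℝ) * g + 1) * Real.pi / (2 * g)) with hc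
  have hds : deriv (fun x => c - r (-x)) = fun x => deriv r (-x) := by
    funext x
    have h1 : HasDerivAt (fun x : ℝ => r (-x)) (deriv r (-x) * (-1)) x :=
      (hd1 (-x)).hasDerivAt.comp x (hasDerivAt_neg x)
    have h2 : HasDerivAt (fun x : ℝ => c - r (-x)) (0 - deriv r (-x) * (-1)) x :=
      (hasDerivAt_const x c).sub h1
    simpa using h2.deriv
  intro x
  simp only [hds]
  have hdd : deriv (fun x : ℝ => deriv r (-x)) x = deriv (deriv r) (-x) * (-1) := by
    exact ((hd2 (-x)).hasDerivAt.comp x (hasDerivAt_neg x)).deriv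
  rw [hdd, hODE (-x), Real.tanh_neg]
  have hA : aa g (-x) = 2 / g * (Real.pi / 2) - aa g x := aa_neg g x
  have e1 : Real.sin (2 * (c - r (-x)) - 2 * aa g x)
      = - Real.sin (2 * r (-x) - 2 * aa g (-x)) := by
    rw [hA, ← Real.sin_neg]
    have harg : 2 * (c - r (-x)) - 2 * aa g x
        = -(2 * r (-x) - (2 / g * (Real.pi / 2) - aa g x) * 2) + j * (2 * Real.pi) := by
      rw [hc]; field_simp; ring
    rw [harg]
    rw [Real.sin_add_int_mul_two_pi]
    ring_nf
  have e2 : Real.sin (2 * (c - r (-x)) + 2 * (g - 1) * aa g x)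
      = - Real.sin (2 * r (-x) + 2 * (g - 1) * aa g (-x)) := by
    rw [hA, ← Real.sin_neg]
    have harg : 2 * (c - r (-x)) + 2 * (g - 1) * aa g x
        = -(2 * r (-x) + 2 * (g - 1) * (2 / g * (Real.pi / 2) - aa g x))
          + (j + 1) * (2 * Real.pi) := by
      rw [hc]; field_simp; ring
    rw [harg]
    rw [show ((j:ℝ) + 1) = ((j + 1 : ℤ) : ℝ) by push_cast; ring]
    rw [Real.sin_add_int_mul_two_pi]
  rw [e1, e2]
  ring
end

section
/- If r: ℝ → ℝ solves the (g,m)-differential equation r''(x) = (m-1)·tanh(x)·r'(x) + (m/(2g))·[(g-1)·sin(2r(x)-2a(x)) + sin(2r(x)+2(g-1)·a(x))] and r(0) = y_j = (jg+1)·π/(2g) for some j ∈ ℤ, then r is point symmetric with respect to (0, y_j), i.e. r(-x) = 2y_j - r(x) for all x ∈ ℝ. -/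
open Real Filter Topology

namespace Stmt7Aux

/-- The vector field of the first-order system associated to the (g,m)-ODE. -/
noncomputable def F (G M : ℝ) (t : ℝ) (p : ℝ × ℝ) : ℝ × ℝ :=
  (p.2, (M - 1) * Real.tanh t * p.2 +
    (M / (2 * G)) * ((G - 1) * Real.sin (2 * p.1 - 2 * aa G t) +
      Real.sin (2 * p.1 + 2 * (G - 1) * aa G t)))

lemma abs_sin_le_abs (t : ℝ) : |Real.sin t| ≤ |t| := by
  have h : ∀ u : ℝ, 0 ≤ u → |Real.sin u| ≤ u := by
    intro u hu
    rw [abs_le]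
    constructor
    · rcases le_total u 1 with h1 | h1
      · have hs : 0 ≤ Real.sin u :=
          Real.sin_nonneg_of_nonneg_of_le_pi hu (by nlinarith [Real.pi_gt_three])
        linarith
      · nlinarith [Real.neg_one_le_sin u]
    · exact Real.sin_le hu
  rcases le_total 0 t with ht | ht
  · rw [abs_of_nonneg ht]; exact h t ht
  · rw [abs_of_nonpos ht]
    have := h (-t) (by linarith)
    rwa [Real.sin_neg, abs_neg] at this

lemma sin_lip (a b : ℝ) : |Real.sin a - Real.sin b| ≤ |a - b| := by
  rw [Real.sin_sub_sin, abs_mul, abs_mul, abs_two]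
  have h1 := abs_sin_le_abs ((a - b) / 2)
  have h2 := Real.abs_cos_le_one ((a + b) / 2)
  have h3 : |(a - b) / 2| = |a - b| / 2 := by rw [abs_div]; norm_num
  nlinarith [abs_nonneg (Real.sin ((a - b) / 2)), abs_nonneg (a - b),
    abs_nonneg (Real.cos ((a + b) / 2))]

lemma abs_tanh_le_one (t : ℝ) : |Real.tanh t| ≤ 1 := by
  rw [Real.tanh_eq_sinh_div_cosh, abs_div, abs_of_pos (Real.cosh_pos t),
    div_le_one (Real.cosh_pos t)]
  rcases abs_cases (Real.sinh t) with ⟨h, _⟩ | ⟨h, _⟩ <;>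
    nlinarith [Real.cosh_pos t, Real.cosh_sq t]

lemma lipF (G M : ℝ) (hG : 1 ≤ G) (hM : 1 ≤ M) (t : ℝ) :
    LipschitzWith ((2 * M).toNNReal) (F G M t) := by
  apply LipschitzWith.of_dist_le_mul
  intro p q
  have hG0 : G ≠ 0 := by linarith
  have hc : ((2 * M).toNNReal : ℝ) = 2 * M := Real.coe_toNNReal _ (by linarith)
  rw [hc, Prod.dist_eq]
  set D := dist p q with hDdef
  have hd1 : dist p.1 q.1 ≤ D := by rw [hDdef, Prod.dist_eq]; exact le_max_left _ _
  have hd2 : dist p.2 q.2 ≤ D := by rw [hDdef, Prod.dist_eq]; exact le_max_right _ _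
  have hD0 : (0 : ℝ) ≤ D := dist_nonneg
  apply max_le
  · show dist p.2 q.2 ≤ 2 * M * D
    nlinarith
  · show dist (F G M t p).2 (F G M t q).2 ≤ 2 * M * D
    simp only [F]
    rw [Real.dist_eq]
    set a := aa G t
    have key : ((M - 1) * Real.tanh t * p.2 +
        M / (2 * G) * ((G - 1) * Real.sin (2 * p.1 - 2 * a) +
          Real.sin (2 * p.1 + 2 * (G - 1) * a))) -
        ((M - 1) * Real.tanh t * q.2 +
        M / (2 * G) * ((G - 1) * Real.sin (2 * q.1 - 2 * a) +
          Real.sin (2 * q.1 + 2 * (G - 1) * a)))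
        = (M - 1) * Real.tanh t * (p.2 - q.2) +
          M / (2 * G) * ((G - 1) * (Real.sin (2 * p.1 - 2 * a) - Real.sin (2 * q.1 - 2 * a)) +
            (Real.sin (2 * p.1 + 2 * (G - 1) * a) - Real.sin (2 * q.1 + 2 * (G - 1) * a))) := by
      ring
    rw [key]
    have s1 : |Real.sin (2 * p.1 - 2 * a) - Real.sin (2 * q.1 - 2 * a)| ≤ 2 * |p.1 - q.1| := by
      calc |Real.sin (2 * p.1 - 2 * a) - Real.sin (2 * q.1 - 2 * a)|
          ≤ |(2 * p.1 - 2 * a) - (2 * q.1 - 2 * a)| := sin_lip _ _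
        _ = 2 * |p.1 - q.1| := by
            rw [show (2 * p.1 - 2 * a) - (2 * q.1 - 2 * a) = 2 * (p.1 - q.1) by ring,
              abs_mul, abs_two]
    have s2 : |Real.sin (2 * p.1 + 2 * (G - 1) * a) - Real.sin (2 * q.1 + 2 * (G - 1) * a)|
        ≤ 2 * |p.1 - q.1| := by
      calc |Real.sin (2 * p.1 + 2 * (G - 1) * a) - Real.sin (2 * q.1 + 2 * (G - 1) * a)|
          ≤ |(2 * p.1 + 2 * (G - 1) * a) - (2 * q.1 + 2 * (G - 1) * a)| := sin_lip _ _
        _ = 2 * |p.1 - q.1| := by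
            rw [show (2 * p.1 + 2 * (G - 1) * a) - (2 * q.1 + 2 * (G - 1) * a)
                = 2 * (p.1 - q.1) by ring, abs_mul, abs_two]
    have hth := abs_tanh_le_one t
    have hc0 : (0 : ℝ) ≤ M / (2 * G) := by positivity
    have t1 : |(M - 1) * Real.tanh t * (p.2 - q.2)| ≤ (M - 1) * |p.2 - q.2| := by
      rw [abs_mul, abs_mul, abs_of_nonneg (by linarith : (0:ℝ) ≤ M - 1), mul_assoc]
      exact mul_le_mul_of_nonneg_left
        (mul_le_of_le_one_left (abs_nonneg _) hth) (by linarith)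
    have t2 : |M / (2 * G) * ((G - 1) * (Real.sin (2 * p.1 - 2 * a) - Real.sin (2 * q.1 - 2 * a)) +
          (Real.sin (2 * p.1 + 2 * (G - 1) * a) - Real.sin (2 * q.1 + 2 * (G - 1) * a)))|
        ≤ M * |p.1 - q.1| := by
      rw [abs_mul, abs_of_nonneg hc0]
      have habs : |(G - 1) * (Real.sin (2 * p.1 - 2 * a) - Real.sin (2 * q.1 - 2 * a)) +
          (Real.sin (2 * p.1 + 2 * (G - 1) * a) - Real.sin (2 * q.1 + 2 * (G - 1) * a))|
          ≤ (G - 1) * (2 * |p.1 - q.1|) + 2 * |p.1 - q.1| := by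
        calc _ ≤ |(G - 1) * (Real.sin (2 * p.1 - 2 * a) - Real.sin (2 * q.1 - 2 * a))| +
              |Real.sin (2 * p.1 + 2 * (G - 1) * a) - Real.sin (2 * q.1 + 2 * (G - 1) * a)| :=
                abs_add_le _ _
          _ ≤ (G - 1) * (2 * |p.1 - q.1|) + 2 * |p.1 - q.1| := by
              rw [abs_mul, abs_of_nonneg (by linarith : (0:ℝ) ≤ G - 1)]
              exact add_le_add (mul_le_mul_of_nonneg_left s1 (by linarith)) s2
      have hmul : M / (2 * G) * ((G - 1) * (2 * |p.1 - q.1|) + 2 * |p.1 - q.1|)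
          = M * |p.1 - q.1| := by field_simp; ring
      calc M / (2 * G) * _ ≤ M / (2 * G) * ((G - 1) * (2 * |p.1 - q.1|) + 2 * |p.1 - q.1|) :=
            mul_le_mul_of_nonneg_left habs hc0
        _ = M * |p.1 - q.1| := hmul
    have hd1' : |p.1 - q.1| ≤ D := by rwa [← Real.dist_eq]
    have hd2' : |p.2 - q.2| ≤ D := by rwa [← Real.dist_eq]
    calc |_ + _| ≤ |(M - 1) * Real.tanh t * (p.2 - q.2)| +
          |M / (2 * G) * ((G - 1) * (Real.sin (2 * p.1 - 2 * a) - Real.sin (2 * q.1 - 2 * a)) +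
            (Real.sin (2 * p.1 + 2 * (G - 1) * a) -
              Real.sin (2 * q.1 + 2 * (G - 1) * a)))| := abs_add_le _ _
      _ ≤ (M - 1) * |p.2 - q.2| + M * |p.1 - q.1| := add_le_add t1 t2
      _ ≤ 2 * M * D := by nlinarith [abs_nonneg (p.1 - q.1), abs_nonneg (p.2 - q.2)]

lemma curve_hasDeriv (G M : ℝ) (r : ℝ → ℝ) (hr : ContDiff ℝ 2 r)
    (hODE : IsGMSol G M r) (t : ℝ) :
    HasDerivAt (fun t => (r t, deriv r t)) (F G M t (r t, deriv r t)) t := by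
  have h2eq : (2 : WithTop ℕ∞) = 1 + 1 := by norm_num
  rw [h2eq] at hr
  have hr2 : ContDiff ℝ 1 (deriv r) := (contDiff_succ_iff_deriv.mp hr).2.2
  have h1 : HasDerivAt r (deriv r t) t :=
    ((contDiff_succ_iff_deriv.mp hr).1 t).hasDerivAt
  have h2 : HasDerivAt (deriv r) (deriv (deriv r) t) t :=
    ((hr2.differentiable one_ne_zero) t).hasDerivAt
  have := h1.prodMk h2
  convert this using 1
  unfold F
  exact Prod.ext rfl (hODE t).symm

lemma aa_neg (G : ℝ) (x : ℝ) : aa G (-x) = Real.pi / G - aa G x := by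
  unfold aa
  rw [Real.exp_neg, Real.arctan_inv_of_pos (Real.exp_pos x)]
  ring

lemma deriv_s (c : ℝ) (r : ℝ → ℝ) :
    deriv (fun x => c - r (-x)) = fun z => deriv r (-z) := by
  funext z
  rw [deriv_const_sub, deriv_comp_neg, neg_neg]

lemma s_sol (G M : ℝ) (hG : 0 < G) (r : ℝ → ℝ) (hODE : IsGMSol G M r) (j : ℤ) :
    IsGMSol G M (fun x => 2 * (((j : ℝ) * G + 1) * Real.pi / (2 * G)) - r (-x)) := by
  have hG0 : G ≠ 0 := ne_of_gt hG
  intro x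
  rw [deriv_s]
  rw [deriv_comp_neg]
  rw [hODE (-x), aa_neg G x, Real.tanh_neg]
  simp only []
  set a := aa G x with ha
  set u := r (-x) with hu
  have key1 : Real.sin (2 * (2 * (((j : ℝ) * G + 1) * Real.pi / (2 * G)) - u) - 2 * a)
      = -Real.sin (2 * u - 2 * (Real.pi / G - a)) := by
    rw [show 2 * (2 * (((j : ℝ) * G + 1) * Real.pi / (2 * G)) - u) - 2 * a
        = -(2 * u - 2 * (Real.pi / G - a)) + (j : ℝ) * (2 * Real.pi) by
      field_simp; ring]
    rw [Real.sin_add_int_mul_two_pi, Real.sin_neg]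
  have key2 : Real.sin (2 * (2 * (((j : ℝ) * G + 1) * Real.pi / (2 * G)) - u)
        + 2 * (G - 1) * a)
      = -Real.sin (2 * u + 2 * (G - 1) * (Real.pi / G - a)) := by
    rw [show 2 * (2 * (((j : ℝ) * G + 1) * Real.pi / (2 * G)) - u) + 2 * (G - 1) * a
        = -(2 * u + 2 * (G - 1) * (Real.pi / G - a)) + ((j + 1 : ℤ) : ℝ) * (2 * Real.pi) by
      push_cast; field_simp; ring]
    rw [Real.sin_add_int_mul_two_pi, Real.sin_neg]
  rw [key1, key2]
  ring

end Stmt7Aux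

open Stmt7Aux in
theorem stmt7 (g m : ℕ) (hg : g ∈ ({1, 2, 3, 4, 6} : Set ℕ)) (hm : 1 ≤ m)
    (r : ℝ → ℝ) (hr : ContDiff ℝ 2 r) (hODE : IsGMSol (g : ℝ) (m : ℝ) r)
    (j : ℤ) (h0 : r 0 = ((j : ℝ) * g + 1) * Real.pi / (2 * g)) :
    ∀ x : ℝ, r (-x) = 2 * (((j : ℝ) * g + 1) * Real.pi / (2 * g)) - r x := by
  have hgN : 1 ≤ g := by
    rcases hg with h | h | h | h | h <;> simp_all
  have hg1 : (1 : ℝ) ≤ (g : ℝ) := by exact_mod_cast hgN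
  have hm1 : (1 : ℝ) ≤ (m : ℝ) := by exact_mod_cast hm
  set G : ℝ := (g : ℝ) with hGdef
  set M : ℝ := (m : ℝ) with hMdef
  set Y : ℝ := ((j : ℝ) * G + 1) * Real.pi / (2 * G) with hY
  set s : ℝ → ℝ := fun x => 2 * Y - r (-x) with hs
  have hsC : ContDiff ℝ 2 s := contDiff_const.sub (hr.comp contDiff_neg)
  have hsSol : IsGMSol G M s := s_sol G M (by linarith) r hODE j
  have hds : deriv s = fun z => deriv r (-z) := deriv_s (2 * Y) r
  have init : (fun t => (r t, deriv r t)) 0 = (fun t => (s t, deriv s t)) 0 := by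
    have h1 : s 0 = r 0 := by
      simp only [hs, neg_zero]
      rw [h0]; ring
    have h2 : deriv s 0 = deriv r 0 := by rw [hds]; simp
    simp only [h1, h2]
  have main : ∀ x : ℝ, 0 ≤ x → r x = s x := by
    intro x hx
    have hlip : ∀ t, LipschitzWith ((2 * M).toNNReal) (F G M t) :=
      fun t => lipF G M hg1 hm1 t
    have hdf : ∀ t, HasDerivAt (fun t => (r t, deriv r t))
        (F G M t ((fun t => (r t, deriv r t)) t)) t :=
      fun t => curve_hasDeriv G M r hr hODE t
    have hdg : ∀ t, HasDerivAt (fun t => (s t, deriv s t))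
        (F G M t ((fun t => (s t, deriv s t)) t)) t :=
      fun t => curve_hasDeriv G M s hsC hsSol t
    have := ODE_solution_unique hlip
      (fun t _ => (hdf t).continuousAt.continuousWithinAt)
      (fun t _ => (hdf t).hasDerivWithinAt)
      (fun t _ => (hdg t).continuousAt.continuousWithinAt)
      (fun t _ => (hdg t).hasDerivWithinAt)
      init (Set.right_mem_Icc.mpr hx)
    exact congrArg Prod.fst this
  intro x
  rcases le_total 0 x with hx | hx
  · have := main x hx
    simp only [hs] at this
    linarith
  · have := main (-x) (by linarith)
    simp only [hs, neg_neg] at this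
    linarith
end

section
/- If r solves the (g,1)-differential equation r''(x) = (1/(2g))·[(g-1)·sin(2r(x)-2a(x)) + sin(2r(x)+2(g-1)·a(x))] (so m = 1, with a(x) = (2/g)·arctan(e^x)) and the limit lim_{x→∞} r(x) = c exists and is finite, then (g-1)·sin(2c - 2π/g) + sin(2c + 2(g-1)π/g) = 0. -/
open Real Filter Topology

/-! Since `a(x) → π/g`, the right-hand side of the equation, hence `r''`, tends to
`(1/(2g))·[(g-1)·sin(2c - 2π/g) + sin(2c + 2(g-1)π/g)]`. A nonzero limit of `r''` would
force `r' → ±∞` and then `r → ±∞`, contradicting `r → c`. -/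

theorem tendsto_atTop_of_eventually_le_deriv {f : ℝ → ℝ} (hf : Differentiable ℝ f)
    {ε : ℝ} (hε : 0 < ε) (h : ∀ᶠ x in atTop, ε ≤ deriv f x) : Tendsto f atTop atTop := by
  obtain ⟨X, hX⟩ := h.exists_forall_of_atTop
  have hlinear : ∀ y ≥ X, f X + ε * (y - X) ≤ f y := fun y hy => by
    have := (convex_Ici X).mul_sub_le_image_sub_of_le_deriv hf.continuous.continuousOn
      hf.differentiableOn (fun x hx => hX x (by rw [interior_Ici] at hx; exact le_of_lt hx))
      X Set.self_mem_Ici y hy hy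
    linarith
  refine tendsto_atTop_mono' _ (eventually_atTop.2 ⟨X, hlinear⟩) ?_
  exact tendsto_atTop_add_const_left _ _
    ((tendsto_atTop_add_const_right _ (-X) tendsto_id).const_mul_atTop hε)

theorem tendsto_atTop_of_tendsto_deriv_deriv_pos {f : ℝ → ℝ} (hf : Differentiable ℝ f)
    (hf' : Differentiable ℝ (deriv f)) {L : ℝ} (hL0 : 0 < L)
    (hL : Tendsto (deriv (deriv f)) atTop (𝓝 L)) : Tendsto f atTop atTop := by
  have hf'_top : Tendsto (deriv f) atTop atTop :=
    tendsto_atTop_of_eventually_le_deriv hf' (half_pos hL0)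
      (hL.eventually (eventually_ge_nhds (half_lt_self hL0)))
  exact tendsto_atTop_of_eventually_le_deriv hf one_pos (hf'_top.eventually_ge_atTop 1)

theorem eq_zero_of_tendsto_deriv_deriv_of_tendsto {f : ℝ → ℝ} (hf : Differentiable ℝ f)
    (hf' : Differentiable ℝ (deriv f)) {L c : ℝ} (hL : Tendsto (deriv (deriv f)) atTop (𝓝 L))
    (hc : Tendsto f atTop (𝓝 c)) : L = 0 := by
  rcases lt_trichotomy L 0 with hneg | rfl | hpos
  · have hneg_top : Tendsto (-f) atTop atTop := by
      refine tendsto_atTop_of_tendsto_deriv_deriv_pos hf.neg ?_ (neg_pos.2 hneg) ?_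
      · simpa using hf'.neg
      · simpa using hL.neg
    exact absurd hneg_top (not_tendsto_atTop_of_tendsto_nhds hc.neg)
  · rfl
  · exact absurd (tendsto_atTop_of_tendsto_deriv_deriv_pos hf hf' hpos hL)
      (not_tendsto_atTop_of_tendsto_nhds hc)

theorem tendsto_aa_atTop (g : ℝ) : Tendsto (aa g) atTop (𝓝 (π / g)) := by
  have h := ((tendsto_arctan_atTop.mono_right nhdsWithin_le_nhds).comp tendsto_exp_atTop).const_mul
    (2 / g)
  rwa [show 2 / g * (π / 2) = π / g by ring] at h

theorem stmt8 (g : ℕ) (hg : 2 ≤ g) (r : ℝ → ℝ) (hr : ContDiff ℝ 2 r)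
    (hODE : IsGMSol (g : ℝ) 1 r) (c : ℝ)
    (hc : Filter.Tendsto r Filter.atTop (nhds c)) :
    ((g : ℝ) - 1) * Real.sin (2 * c - 2 * Real.pi / g) +
      Real.sin (2 * c + 2 * ((g : ℝ) - 1) * Real.pi / g) = 0 := by
  have hg0 : (g : ℝ) ≠ 0 := Nat.cast_ne_zero.2 (by omega)
  obtain ⟨hr1, -, hr'⟩ := (contDiff_succ_iff_deriv (n := 1)).1 hr
  have ha := tendsto_aa_atTop g
  have hforce : Tendsto (fun x => ((g : ℝ) - 1) * sin (2 * r x - 2 * aa g x) +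
      sin (2 * r x + 2 * ((g : ℝ) - 1) * aa g x)) atTop
      (𝓝 (((g : ℝ) - 1) * sin (2 * c - 2 * π / g) +
        sin (2 * c + 2 * ((g : ℝ) - 1) * π / g))) := by
    simp only [mul_div_assoc]
    exact (((continuous_sin.tendsto _).comp
      ((hc.const_mul 2).sub (ha.const_mul 2))).const_mul _).add
      ((continuous_sin.tendsto _).comp ((hc.const_mul 2).add (ha.const_mul _)))
  have hr'' : Tendsto (deriv (deriv r)) atTop (𝓝 (1 / (2 * g) * (((g : ℝ) - 1) *
      sin (2 * c - 2 * π / g) + sin (2 * c + 2 * ((g : ℝ) - 1) * π / g)))) :=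
    (hforce.const_mul _).congr fun x => by rw [hODE x]; ring
  simpa [hg0] using
    eq_zero_of_tendsto_deriv_deriv_of_tendsto hr1 (hr'.differentiable one_ne_zero) hr'' hc
end

section
/- Let r solve the (g,1)-ODE, and define W(x) = (1/2)·r'(x)² − (1/(2g))·h_1(x)·sin²(r(x)) − (1/(2g))·h_2(x)·sin²(r(x) − 3π/4), where h_1(x) = (g-1)·cos(2a(x)) + cos(2(g-1)a(x)), h_2(x) = −(g-1)·sin(2a(x)) + sin(2(g-1)a(x)), a(x) = (2/g)·arctan(e^x). Then W'(x) = −(1/(2g))·(h_1'(x)·sin²(r(x)) + h_2'(x)·sin²(r(x) − 3π/4)) for all x ∈ ℝ. -/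
open Real Filter Topology

lemma aux_diff_aa (g : ℝ) : Differentiable ℝ (aa g) :=
  (Real.differentiable_arctan.comp Real.differentiable_exp).const_mul _

lemma aux_diff_h1 (g : ℝ) (x : ℝ) : DifferentiableAt ℝ (h1 g) x := by
  have h := aux_diff_aa g
  exact (((Real.differentiable_cos.comp (h.const_mul 2)).const_mul (g - 1)).add
    (Real.differentiable_cos.comp (h.const_mul (2 * (g - 1))))).differentiableAt

lemma aux_diff_h2 (g : ℝ) (x : ℝ) : DifferentiableAt ℝ (h2 g) x := by
  have h := aux_diff_aa g
  exact (((Real.differentiable_sin.comp (h.const_mul 2)).const_mul (-(g - 1))).add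
    (Real.differentiable_sin.comp (h.const_mul (2 * (g - 1))))).differentiableAt

lemma aux_sc (y : ℝ) :
    Real.sin (y - 3 * Real.pi / 4) * Real.cos (y - 3 * Real.pi / 4)
      = Real.cos (2 * y) / 2 := by
  have e1 : Real.sin (y - 3 * Real.pi / 4) * Real.cos (y - 3 * Real.pi / 4)
      = Real.sin (2 * (y - 3 * Real.pi / 4)) / 2 := by
    rw [Real.sin_two_mul]; ring
  rw [e1]
  have e2 : 2 * (y - 3 * Real.pi / 4) = 2 * y - (Real.pi + Real.pi / 2) := by ring
  rw [e2, Real.sin_sub, Real.sin_add, Real.cos_add]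
  simp

theorem stmt9 (g : ℕ) (hg : 2 ≤ g) (r : ℝ → ℝ) (hr : ContDiff ℝ 2 r)
    (hODE : IsGMSol (g : ℝ) 1 r) :
    ∀ x : ℝ, deriv (W (g : ℝ) r) x =
      -(1 / (2 * (g : ℝ))) * (deriv (h1 (g : ℝ)) x * (Real.sin (r x)) ^ 2 +
        deriv (h2 (g : ℝ)) x * (Real.sin (r x - 3 * Real.pi / 4)) ^ 2) := by
  intro x
  have hgpos : (0 : ℝ) < (g : ℝ) := by positivity
  have hgne : (g : ℝ) ≠ 0 := ne_of_gt hgpos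
  -- differentiability facts
  have hdr : Differentiable ℝ r := hr.differentiable (by norm_num)
  have hdr1 : ContDiff ℝ 1 (deriv r) := by
    have h := (contDiff_succ_iff_deriv (n := 1)).mp (by exact_mod_cast hr)
    exact h.2.2
  have hddr : Differentiable ℝ (deriv r) := hdr1.differentiable one_ne_zero
  have hr' : HasDerivAt r (deriv r x) x := (hdr x).hasDerivAt
  have hr'' : HasDerivAt (deriv r) (deriv (deriv r) x) x := (hddr x).hasDerivAt
  have hh1 : HasDerivAt (h1 (g : ℝ)) (deriv (h1 (g : ℝ)) x) x :=
    (aux_diff_h1 (g : ℝ) x).hasDerivAt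
  have hh2 : HasDerivAt (h2 (g : ℝ)) (deriv (h2 (g : ℝ)) x) x :=
    (aux_diff_h2 (g : ℝ) x).hasDerivAt
  -- derivative of each piece
  have hA : HasDerivAt (fun y => (1 / 2 : ℝ) * (deriv r y) ^ 2)
      ((1 / 2 : ℝ) * ((2 : ℕ) * (deriv r x) ^ 1 * deriv (deriv r) x)) x :=
    (hr''.pow 2).const_mul (1 / 2)
  have hsin : HasDerivAt (fun y => (Real.sin (r y)) ^ 2)
      ((2 : ℕ) * (Real.sin (r x)) ^ 1 * (Real.cos (r x) * deriv r x)) x :=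
    (hr'.sin).pow 2
  have hsin2 : HasDerivAt (fun y => (Real.sin (r y - 3 * Real.pi / 4)) ^ 2)
      ((2 : ℕ) * (Real.sin (r x - 3 * Real.pi / 4)) ^ 1 *
        (Real.cos (r x - 3 * Real.pi / 4) * deriv r x)) x :=
    ((hr'.sub_const (3 * Real.pi / 4)).sin).pow 2
  have hB : HasDerivAt (fun y => (1 / (2 * (g : ℝ))) * h1 (g : ℝ) y * (Real.sin (r y)) ^ 2)
      ((1 / (2 * (g : ℝ))) * deriv (h1 (g : ℝ)) x * (Real.sin (r x)) ^ 2 +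
        (1 / (2 * (g : ℝ))) * h1 (g : ℝ) x *
          ((2 : ℕ) * (Real.sin (r x)) ^ 1 * (Real.cos (r x) * deriv r x))) x :=
    (hh1.const_mul (1 / (2 * (g : ℝ)))).mul hsin
  have hC : HasDerivAt
      (fun y => (1 / (2 * (g : ℝ))) * h2 (g : ℝ) y * (Real.sin (r y - 3 * Real.pi / 4)) ^ 2)
      ((1 / (2 * (g : ℝ))) * deriv (h2 (g : ℝ)) x * (Real.sin (r x - 3 * Real.pi / 4)) ^ 2 +
        (1 / (2 * (g : ℝ))) * h2 (g : ℝ) x *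
          ((2 : ℕ) * (Real.sin (r x - 3 * Real.pi / 4)) ^ 1 *
            (Real.cos (r x - 3 * Real.pi / 4) * deriv r x))) x :=
    (hh2.const_mul (1 / (2 * (g : ℝ)))).mul hsin2
  have hW : HasDerivAt (W (g : ℝ) r) _ x := (hA.sub hB).sub hC
  rw [hW.deriv]
  -- use the ODE
  have hode := hODE x
  simp only [sub_self, zero_mul, zero_add] at hode
  have hsc := aux_sc (r x)
  have hs2 : Real.sin (2 * r x) = 2 * Real.sin (r x) * Real.cos (r x) :=
    Real.sin_two_mul (r x)
  rw [Real.sin_sub (2 * r x) (2 * aa (g : ℝ) x),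
    Real.sin_add (2 * r x) (2 * ((g : ℝ) - 1) * aa (g : ℝ) x), hs2] at hode
  rw [hode]
  simp only [h1, h2]
  push_cast
  linear_combination (-(2:ℝ) * (1 / (2 * (g:ℝ))) * deriv r x *
    (-((g:ℝ) - 1) * Real.sin (2 * aa (g:ℝ) x) +
      Real.sin (2 * ((g:ℝ) - 1) * aa (g:ℝ) x))) * hsc
end

section
/- For g ∈ {2,3,4}, if r solves the (g,1)-ODE then the function W(x) = (1/2)·r'(x)² − (1/(2g))·h_1(x)·sin²(r(x)) − (1/(2g))·h_2(x)·sin²(r(x)−3π/4) is monotone increasing on ℝ. -/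
open Real Filter Topology

lemma sin_cos_shift (R : ℝ) :
    2 * Real.sin (R - 3 * Real.pi / 4) * Real.cos (R - 3 * Real.pi / 4) = Real.cos (2 * R) := by
  have hc : Real.cos (3 * Real.pi / 4) = -(Real.sqrt 2 / 2) := by
    rw [show (3 * Real.pi / 4) = Real.pi - Real.pi / 4 by ring, Real.cos_pi_sub,
      Real.cos_pi_div_four]
  have hs : Real.sin (3 * Real.pi / 4) = Real.sqrt 2 / 2 := by
    rw [show (3 * Real.pi / 4) = Real.pi - Real.pi / 4 by ring, Real.sin_pi_sub,
      Real.sin_pi_div_four]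
  have h2 : (Real.sqrt 2) ^ 2 = 2 := Real.sq_sqrt (by norm_num)
  rw [Real.sin_sub, Real.cos_sub, hc, hs, Real.cos_two_mul]
  nlinarith [Real.sin_sq_add_cos_sq R]

noncomputable def Wd (g : ℝ) (r : ℝ → ℝ) (x : ℝ) : ℝ :=
  (1 / (2 * g)) * (4 * ((g - 1) * ((2 / g) * (Real.exp x / (1 + Real.exp x ^ 2))))) *
    (Real.sin (g * aa g x) * Real.cos ((g - 2) * aa g x) * (Real.sin (r x)) ^ 2 +
      Real.sin (g * aa g x) * Real.sin ((g - 2) * aa g x) *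
        (Real.sin (r x - 3 * Real.pi / 4)) ^ 2)

theorem stmt10 (g : ℝ) (hg : g ∈ ({2, 3, 4} : Set ℝ)) (r : ℝ → ℝ)
    (hr : ContDiff ℝ 2 r) (hODE : IsGMSol g 1 r) :
    Monotone (W g r) := by
  have hg24 : (2:ℝ) ≤ g ∧ g ≤ 4 := by
    rcases hg with h | h | h <;> rw [h] <;> norm_num
  obtain ⟨hg2, hg4⟩ := hg24
  have hgpos : (0:ℝ) < g := by linarith
  have hgne : g ≠ 0 := ne_of_gt hgpos
  have hr' : Differentiable ℝ r ∧ ContDiff ℝ 1 (deriv r) := by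
    have := (contDiff_succ_iff_deriv (n := 1)).mp (by norm_num at hr ⊢; exact hr)
    exact ⟨this.1, this.2.2⟩
  have hdr : Differentiable ℝ (deriv r) := hr'.2.differentiable one_ne_zero
  have key : ∀ x : ℝ, HasDerivAt (W g r) (Wd g r x) x := by
    intro x
    have hA'pos : (0:ℝ) < 1 + Real.exp x ^ 2 := by positivity
    set A' : ℝ := (2/g) * (Real.exp x / (1 + Real.exp x ^ 2)) with hA'def
    -- derivative of aa g
    have hA : HasDerivAt (aa g) A' x := by
      have harc : HasDerivAt (fun y : ℝ => Real.arctan (Real.exp y))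
          (1 / (1 + Real.exp x ^ 2) * Real.exp x) x :=
        (Real.hasDerivAt_arctan (Real.exp x)).comp x (Real.hasDerivAt_exp x)
      have := harc.const_mul (2 / g)
      refine this.congr_deriv ?_
      rw [hA'def]; ring
    have e1 : HasDerivAt (fun y => 2 * aa g y) (2 * A') x := hA.const_mul 2
    have e2 : HasDerivAt (fun y => 2 * (g - 1) * aa g y) (2 * (g - 1) * A') x :=
      hA.const_mul (2 * (g - 1))
    have hH1 : HasDerivAt (h1 g)
        ((g - 1) * (-Real.sin (2 * aa g x) * (2 * A')) +
          -Real.sin (2 * (g - 1) * aa g x) * (2 * (g - 1) * A')) x :=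
      (e1.cos.const_mul (g - 1)).add e2.cos
    have hH2 : HasDerivAt (h2 g)
        (-(g - 1) * (Real.cos (2 * aa g x) * (2 * A')) +
          Real.cos (2 * (g - 1) * aa g x) * (2 * (g - 1) * A')) x :=
      (e1.sin.const_mul (-(g - 1))).add e2.sin
    have hrx : HasDerivAt r (deriv r x) x := hr'.1.differentiableAt.hasDerivAt
    have hdrx : HasDerivAt (deriv r) (deriv (deriv r) x) x := hdr.differentiableAt.hasDerivAt
    -- build derivative of W
    have hW : HasDerivAt (W g r)
        ((1 / 2) * (2 * deriv r x * deriv (deriv r) x)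
          - ((1 / (2 * g)) * ((g - 1) * (-Real.sin (2 * aa g x) * (2 * A')) +
              -Real.sin (2 * (g - 1) * aa g x) * (2 * (g - 1) * A')) * (Real.sin (r x)) ^ 2
            + (1 / (2 * g)) * h1 g x *
              (2 * Real.sin (r x) * (Real.cos (r x) * deriv r x)))
          - ((1 / (2 * g)) * (-(g - 1) * (Real.cos (2 * aa g x) * (2 * A')) +
              Real.cos (2 * (g - 1) * aa g x) * (2 * (g - 1) * A')) *
                (Real.sin (r x - 3 * Real.pi / 4)) ^ 2
            + (1 / (2 * g)) * h2 g x *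
              (2 * Real.sin (r x - 3 * Real.pi / 4) *
                (Real.cos (r x - 3 * Real.pi / 4) * deriv r x)))) x := by
      have t1 : HasDerivAt (fun y => (1 / 2) * (deriv r y) ^ 2)
          ((1 / 2) * (2 * deriv r x * deriv (deriv r) x)) x := by
        have := (hdrx.pow 2).const_mul (1 / 2 : ℝ)
        refine this.congr_deriv ?_
        ring
      have t2 : HasDerivAt (fun y => (1 / (2 * g)) * h1 g y * (Real.sin (r y)) ^ 2)
          ((1 / (2 * g)) * ((g - 1) * (-Real.sin (2 * aa g x) * (2 * A')) +
              -Real.sin (2 * (g - 1) * aa g x) * (2 * (g - 1) * A')) * (Real.sin (r x)) ^ 2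
            + (1 / (2 * g)) * h1 g x *
              (2 * Real.sin (r x) * (Real.cos (r x) * deriv r x))) x := by
        have hs : HasDerivAt (fun y => (Real.sin (r y)) ^ 2)
            (2 * Real.sin (r x) * (Real.cos (r x) * deriv r x)) x := by
          have := (hrx.sin).pow 2
          exact this.congr_deriv (by ring)
        have := (hH1.const_mul (1 / (2 * g))).mul hs
        exact this.congr_deriv (by ring)
      have t3 : HasDerivAt
          (fun y => (1 / (2 * g)) * h2 g y * (Real.sin (r y - 3 * Real.pi / 4)) ^ 2)
          ((1 / (2 * g)) * (-(g - 1) * (Real.cos (2 * aa g x) * (2 * A')) +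
              Real.cos (2 * (g - 1) * aa g x) * (2 * (g - 1) * A')) *
                (Real.sin (r x - 3 * Real.pi / 4)) ^ 2
            + (1 / (2 * g)) * h2 g x *
              (2 * Real.sin (r x - 3 * Real.pi / 4) *
                (Real.cos (r x - 3 * Real.pi / 4) * deriv r x))) x := by
        have hsub : HasDerivAt (fun y => r y - 3 * Real.pi / 4) (deriv r x) x :=
          hrx.sub_const _
        have hs : HasDerivAt (fun y => (Real.sin (r y - 3 * Real.pi / 4)) ^ 2)
            (2 * Real.sin (r x - 3 * Real.pi / 4) *
              (Real.cos (r x - 3 * Real.pi / 4) * deriv r x)) x := by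
          have := (hsub.sin).pow 2
          exact this.congr_deriv (by ring)
        have := (hH2.const_mul (1 / (2 * g))).mul hs
        exact this.congr_deriv (by ring)
      exact (t1.sub t2).sub t3
    convert hW using 1
    -- now the algebraic identity
    have hode := hODE x
    rw [show ((1:ℝ) - 1) = 0 by norm_num] at hode
    simp only [zero_mul, zero_add, one_div] at hode
    have hrr : deriv (deriv r) x = (1 / (2 * g)) *
        ((g - 1) * Real.sin (2 * r x - 2 * aa g x) +
          Real.sin (2 * r x + 2 * (g - 1) * aa g x)) := by
      rw [hode]; ring
    -- identity 1: ODE RHS in terms of h1, h2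
    have hid1 : (g - 1) * Real.sin (2 * r x - 2 * aa g x) +
        Real.sin (2 * r x + 2 * (g - 1) * aa g x)
        = h1 g x * Real.sin (2 * r x) + h2 g x * Real.cos (2 * r x) := by
      rw [Real.sin_sub, Real.sin_add]
      unfold h1 h2
      ring
    -- identity for sin double angles
    have hsin2r : Real.sin (2 * r x) = 2 * Real.sin (r x) * Real.cos (r x) :=
      Real.sin_two_mul (r x)
    have hshift := sin_cos_shift (r x)
    -- sum-to-product identities
    have hsum : Real.sin (2 * aa g x) + Real.sin (2 * (g - 1) * aa g x)
        = 2 * Real.sin (g * aa g x) * Real.cos ((g - 2) * aa g x) := by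
      rw [show 2 * aa g x = g * aa g x - (g - 2) * aa g x by ring,
        show 2 * (g - 1) * aa g x = g * aa g x + (g - 2) * aa g x by ring,
        Real.sin_sub, Real.sin_add]
      ring
    have hdiffc : Real.cos (2 * aa g x) - Real.cos (2 * (g - 1) * aa g x)
        = 2 * Real.sin (g * aa g x) * Real.sin ((g - 2) * aa g x) := by
      rw [show 2 * aa g x = g * aa g x - (g - 2) * aa g x by ring,
        show 2 * (g - 1) * aa g x = g * aa g x + (g - 2) * aa g x by ring,
        Real.cos_sub, Real.cos_add]
      ring
    rw [hrr, hid1]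
    unfold Wd
    simp only [hA'def] at *
    linear_combination
      (-((1 / (2 * g)) * deriv r x * h1 g x)) * hsin2r
      + ((1 / (2 * g)) * deriv r x * h2 g x) * hshift
      + (-((1 / (2 * g)) * (2 * (g - 1) * ((2 / g) * (Real.exp x / (1 + Real.exp x ^ 2)))) *
          Real.sin (r x) ^ 2)) * hsum
      + (-((1 / (2 * g)) * (2 * (g - 1) * ((2 / g) * (Real.exp x / (1 + Real.exp x ^ 2)))) *
          Real.sin (r x - 3 * Real.pi / 4) ^ 2)) * hdiffc
  have hdiff : Differentiable ℝ (W g r) := fun x => (key x).differentiableAt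
  apply monotone_of_deriv_nonneg hdiff
  intro x
  rw [(key x).deriv]
  unfold Wd
  have hat : 0 < Real.arctan (Real.exp x) := by rw [← Real.arctan_zero]; exact Real.arctan_strictMono (Real.exp_pos x)
  have hat2 : Real.arctan (Real.exp x) < Real.pi / 2 := Real.arctan_lt_pi_div_two _
  have hApos : 0 < aa g x := by unfold aa; positivity
  have hgA : g * aa g x = 2 * Real.arctan (Real.exp x) := by
    unfold aa; field_simp
  have hsin_gA : 0 ≤ Real.sin (g * aa g x) := by
    rw [hgA]
    apply Real.sin_nonneg_of_nonneg_of_le_pi <;> nlinarith [Real.pi_pos]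
  have hg2A_le : (g - 2) * aa g x ≤ Real.pi / 2 := by
    unfold aa
    rw [show (g - 2) * ((2 / g) * Real.arctan (Real.exp x))
        = ((g - 2) * 2 / g) * Real.arctan (Real.exp x) by ring]
    have h1 : (g - 2) * 2 / g ≤ 1 := by
      rw [div_le_one hgpos]; linarith
    have h0 : 0 ≤ (g - 2) * 2 / g := by
      apply div_nonneg (by nlinarith) (le_of_lt hgpos)
    calc ((g - 2) * 2 / g) * Real.arctan (Real.exp x) ≤ 1 * (Real.pi / 2) :=
          mul_le_mul h1 (le_of_lt hat2) (le_of_lt hat) (by norm_num)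
      _ = Real.pi / 2 := by ring
  have hg2A_nonneg : 0 ≤ (g - 2) * aa g x := by nlinarith
  have hcos2A : 0 ≤ Real.cos ((g - 2) * aa g x) :=
    Real.cos_nonneg_of_mem_Icc ⟨by linarith [Real.pi_pos], hg2A_le⟩
  have hsin2A : 0 ≤ Real.sin ((g - 2) * aa g x) :=
    Real.sin_nonneg_of_nonneg_of_le_pi hg2A_nonneg (by linarith [Real.pi_pos])
  have hA'pos : (0:ℝ) ≤ 4 * ((g - 1) * ((2 / g) * (Real.exp x / (1 + Real.exp x ^ 2)))) := by
    have h1 : (0:ℝ) ≤ g - 1 := by linarith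
    positivity
  have hc : (0:ℝ) ≤ 1 / (2 * g) := by positivity
  have hterm : 0 ≤ Real.sin (g * aa g x) * Real.cos ((g - 2) * aa g x) * (Real.sin (r x)) ^ 2 +
      Real.sin (g * aa g x) * Real.sin ((g - 2) * aa g x) *
        (Real.sin (r x - 3 * Real.pi / 4)) ^ 2 := by
    have := mul_nonneg (mul_nonneg hsin_gA hcos2A) (sq_nonneg (Real.sin (r x)))
    have := mul_nonneg (mul_nonneg hsin_gA hsin2A)
      (sq_nonneg (Real.sin (r x - 3 * Real.pi / 4)))
    linarith
  exact mul_nonneg (mul_nonneg hc hA'pos) hterm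
end

section
/- For g ∈ {2,3,4,6}, if r solves the (g,1)-ODE then W'(x) → 0 as x → ±∞, and both limits lim_{x→∞} W(x) and lim_{x→−∞} W(x) exist and are finite. -/
open Real Filter Topology MeasureTheory Set

/-- derivative of aa -/
noncomputable def Aa (g x : ℝ) : ℝ := 2 / g * (Real.exp x / (1 + Real.exp x ^ 2))

/-- derivative of h1 -/
noncomputable def H1d (g x : ℝ) : ℝ :=
  -(2 * (g - 1) * Aa g x) * (Real.sin (2 * aa g x) + Real.sin (2 * (g - 1) * aa g x))

/-- derivative of h2 -/
noncomputable def H2d (g x : ℝ) : ℝ :=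
  (2 * (g - 1) * Aa g x) * (Real.cos (2 * (g - 1) * aa g x) - Real.cos (2 * aa g x))

/-- derivative of W -/
noncomputable def V (g : ℝ) (r : ℝ → ℝ) (x : ℝ) : ℝ :=
  -(1 / (2 * g)) * (H1d g x * Real.sin (r x) ^ 2
    + H2d g x * Real.sin (r x - 3 * Real.pi / 4) ^ 2)

lemma hasDerivAt_aa (g x : ℝ) : HasDerivAt (aa g) (Aa g x) x := by
  have h := ((Real.hasDerivAt_arctan (Real.exp x)).comp x (Real.hasDerivAt_exp x)).const_mul
    (2 / g)
  convert h using 1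
  · rfl
  · rfl
  · rfl
  unfold Aa
  ring

lemma hasDerivAt_h1 (g x : ℝ) : HasDerivAt (h1 g) (H1d g x) x := by
  have ha := hasDerivAt_aa g x
  have h1' := ((Real.hasDerivAt_cos (2 * aa g x)).comp x (ha.const_mul 2)).const_mul (g - 1)
  have h2' := (Real.hasDerivAt_cos (2 * (g - 1) * aa g x)).comp x (ha.const_mul (2 * (g - 1)))
  have := h1'.add h2'
  convert this using 1
  · rfl
  · rfl
  · rfl
  unfold H1d
  ring

lemma hasDerivAt_h2 (g x : ℝ) : HasDerivAt (h2 g) (H2d g x) x := by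
  have ha := hasDerivAt_aa g x
  have h1' := ((Real.hasDerivAt_sin (2 * aa g x)).comp x (ha.const_mul 2)).const_mul (-(g - 1))
  have h2' := (Real.hasDerivAt_sin (2 * (g - 1) * aa g x)).comp x (ha.const_mul (2 * (g - 1)))
  have := h1'.add h2'
  convert this using 1
  · rfl
  · rfl
  · rfl
  unfold H2d
  ring

lemma two_sin_cos_shift (θ : ℝ) :
    2 * Real.sin (θ - 3 * Real.pi / 4) * Real.cos (θ - 3 * Real.pi / 4) =
      Real.cos θ ^ 2 - Real.sin θ ^ 2 := by
  have h34s : Real.sin (3 * Real.pi / 4) = Real.sqrt 2 / 2 := by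
    have : (3 * Real.pi / 4 : ℝ) = Real.pi / 2 + Real.pi / 4 := by ring
    rw [this, Real.sin_add, Real.sin_pi_div_two, Real.cos_pi_div_two, Real.cos_pi_div_four]
    ring
  have h34c : Real.cos (3 * Real.pi / 4) = -(Real.sqrt 2 / 2) := by
    have : (3 * Real.pi / 4 : ℝ) = Real.pi / 2 + Real.pi / 4 := by ring
    rw [this, Real.cos_add, Real.sin_pi_div_two, Real.cos_pi_div_two, Real.sin_pi_div_four]
    ring
  rw [Real.sin_sub, Real.cos_sub, h34s, h34c]
  have h2 : Real.sqrt 2 ^ 2 = 2 := Real.sq_sqrt (by norm_num)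
  nlinarith [h2]

lemma hasDerivAt_W (g : ℝ) (hg : g ≠ 0) (r : ℝ → ℝ) (hr : ContDiff ℝ 2 r)
    (hODE : IsGMSol g 1 r) (x : ℝ) : HasDerivAt (W g r) (V g r x) x := by
  have hC2 : ContDiff ℝ (1 + 1) r := by norm_num; exact hr
  obtain ⟨hdr, -, hdr1⟩ := contDiff_succ_iff_deriv.mp hC2
  have hdr2 : Differentiable ℝ (deriv r) := hdr1.differentiable one_ne_zero
  -- pieces
  have Ht1 : HasDerivAt (fun y => (1 / 2 : ℝ) * (deriv r y) ^ 2)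
      (deriv r x * deriv (deriv r) x) x := by
    have := ((hdr2 x).hasDerivAt.pow 2).const_mul (1 / 2 : ℝ)
    convert this using 1
    · rfl
    · rfl
    · rfl
    push_cast
    ring
  have Hsin : HasDerivAt (fun y => (Real.sin (r y)) ^ 2)
      (2 * Real.sin (r x) * (Real.cos (r x) * deriv r x)) x := by
    have := (((Real.hasDerivAt_sin (r x)).comp x (hdr x).hasDerivAt).pow 2)
    convert this using 1
    · rfl
    · rfl
    · rfl
    simp only [Function.comp_apply]
    push_cast
    ring
  have HsinT : HasDerivAt (fun y => (Real.sin (r y - 3 * Real.pi / 4)) ^ 2)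
      (2 * Real.sin (r x - 3 * Real.pi / 4) *
        (Real.cos (r x - 3 * Real.pi / 4) * deriv r x)) x := by
    have hin : HasDerivAt (fun y => r y - 3 * Real.pi / 4) (deriv r x) x :=
      (hdr x).hasDerivAt.sub_const _
    have := (((Real.hasDerivAt_sin (r x - 3 * Real.pi / 4)).comp x hin).pow 2)
    convert this using 1
    · rfl
    · rfl
    · rfl
    simp only [Function.comp_apply]
    push_cast
    ring
  have Ht2 : HasDerivAt (fun y => (1 / (2 * g)) * h1 g y * (Real.sin (r y)) ^ 2)
      ((1 / (2 * g)) * (H1d g x * (Real.sin (r x)) ^ 2 +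
        h1 g x * (2 * Real.sin (r x) * (Real.cos (r x) * deriv r x)))) x := by
    have := ((hasDerivAt_h1 g x).const_mul (1 / (2 * g))).mul Hsin
    convert this using 1
    · rfl
    · rfl
    · rfl
    ring
  have Ht3 : HasDerivAt (fun y => (1 / (2 * g)) * h2 g y *
      (Real.sin (r y - 3 * Real.pi / 4)) ^ 2)
      ((1 / (2 * g)) * (H2d g x * (Real.sin (r x - 3 * Real.pi / 4)) ^ 2 +
        h2 g x * (2 * Real.sin (r x - 3 * Real.pi / 4) *
          (Real.cos (r x - 3 * Real.pi / 4) * deriv r x)))) x := by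
    have := ((hasDerivAt_h2 g x).const_mul (1 / (2 * g))).mul HsinT
    convert this using 1
    · rfl
    · rfl
    · rfl
    ring
  have hW : HasDerivAt (W g r) _ x := (Ht1.sub Ht2).sub Ht3
  convert hW using 1
  rw [hODE x, Real.sin_sub (2 * r x) (2 * aa g x),
    Real.sin_add (2 * r x) (2 * (g - 1) * aa g x),
    Real.sin_two_mul (r x), Real.cos_two_mul' (r x)]
  have hT := two_sin_cos_shift (r x)
  unfold V h1 h2
  linear_combination (1 / (2 * g)) * deriv r x *
    (-(g - 1) * Real.sin (2 * aa g x) + Real.sin (2 * (g - 1) * aa g x)) * hT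

lemma V_cont (g : ℝ) (r : ℝ → ℝ) (hr : Continuous r) : Continuous (V g r) := by
  have he : Continuous (fun x : ℝ => Real.exp x / (1 + Real.exp x ^ 2)) :=
    Continuous.div (by continuity) (by continuity) (fun x => by positivity)
  have haa : Continuous (aa g) := by
    unfold aa; exact continuous_const.mul (Real.continuous_arctan.comp Real.continuous_exp)
  have hAa : Continuous (Aa g) := by unfold Aa; exact continuous_const.mul he
  have hH1 : Continuous (H1d g) := by
    unfold H1d
    exact ((continuous_const.mul hAa).neg).mul
      ((Real.continuous_sin.comp (continuous_const.mul haa)).add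
        (Real.continuous_sin.comp (continuous_const.mul haa)))
  have hH2 : Continuous (H2d g) := by
    unfold H2d
    exact (continuous_const.mul hAa).mul
      ((Real.continuous_cos.comp (continuous_const.mul haa)).sub
        (Real.continuous_cos.comp (continuous_const.mul haa)))
  unfold V
  exact continuous_const.mul
    ((hH1.mul ((Real.continuous_sin.comp hr).pow 2)).add
      (hH2.mul ((Real.continuous_sin.comp (hr.sub continuous_const)).pow 2)))

lemma V_bound (g : ℝ) (hg : 2 ≤ g) (r : ℝ → ℝ) (x : ℝ) :
    |V g r x| ≤ 8 * (g - 1) / g ^ 2 * Real.exp (-|x|) := by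
  have hg0 : (0 : ℝ) < g := by linarith
  have hg1 : (0 : ℝ) ≤ g - 1 := by linarith
  have hE : Real.exp x / (1 + Real.exp x ^ 2) ≤ Real.exp (-|x|) := by
    rw [div_le_iff₀ (by positivity)]
    have hmul : Real.exp (-x) * Real.exp x = 1 := by
      rw [← Real.exp_add]; simp
    have h3 : Real.exp (-x) * Real.exp x ^ 2 = Real.exp x := by
      rw [pow_two, ← mul_assoc, hmul, one_mul]
    rcases abs_cases x with ⟨h, _⟩ | ⟨h, _⟩
    · rw [h]
      nlinarith [h3, Real.exp_pos (-x)]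
    · rw [h, neg_neg]
      nlinarith [Real.exp_pos x, sq_nonneg (Real.exp x)]
  have hEpos : (0 : ℝ) ≤ Real.exp x / (1 + Real.exp x ^ 2) := by positivity
  have hAa : |Aa g x| ≤ 2 / g * Real.exp (-|x|) := by
    unfold Aa
    rw [abs_mul, abs_of_nonneg (by positivity : (0:ℝ) ≤ 2 / g), abs_of_nonneg hEpos]
    exact mul_le_mul_of_nonneg_left hE (by positivity)
  have hs1 : |Real.sin (2 * aa g x) + Real.sin (2 * (g - 1) * aa g x)| ≤ 2 := by
    calc |Real.sin (2 * aa g x) + Real.sin (2 * (g - 1) * aa g x)| ≤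
        |Real.sin (2 * aa g x)| + |Real.sin (2 * (g - 1) * aa g x)| := abs_add_le _ _
      _ ≤ 1 + 1 := add_le_add (Real.abs_sin_le_one _) (Real.abs_sin_le_one _)
      _ = 2 := by norm_num
  have hs2 : |Real.cos (2 * (g - 1) * aa g x) - Real.cos (2 * aa g x)| ≤ 2 := by
    calc |Real.cos (2 * (g - 1) * aa g x) - Real.cos (2 * aa g x)| ≤
        |Real.cos (2 * (g - 1) * aa g x)| + |Real.cos (2 * aa g x)| := abs_sub _ _
      _ ≤ 1 + 1 := add_le_add (Real.abs_cos_le_one _) (Real.abs_cos_le_one _)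
      _ = 2 := by norm_num
  have hH1 : |H1d g x| ≤ 4 * (g - 1) * (2 / g * Real.exp (-|x|)) := by
    unfold H1d
    rw [abs_mul, abs_neg, abs_mul, abs_mul]
    rw [abs_of_nonneg (by norm_num : (0:ℝ) ≤ 2), abs_of_nonneg hg1]
    calc 2 * (g - 1) * |Aa g x| * |Real.sin (2 * aa g x) + Real.sin (2 * (g - 1) * aa g x)|
        ≤ 2 * (g - 1) * (2 / g * Real.exp (-|x|)) * 2 := by
          apply mul_le_mul
          · exact mul_le_mul_of_nonneg_left hAa (by positivity)
          · exact hs1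
          · exact abs_nonneg _
          · positivity
      _ = 4 * (g - 1) * (2 / g * Real.exp (-|x|)) := by ring
  have hH2 : |H2d g x| ≤ 4 * (g - 1) * (2 / g * Real.exp (-|x|)) := by
    unfold H2d
    rw [abs_mul, abs_mul, abs_mul]
    rw [abs_of_nonneg (by norm_num : (0:ℝ) ≤ 2), abs_of_nonneg hg1]
    calc 2 * (g - 1) * |Aa g x| * |Real.cos (2 * (g - 1) * aa g x) - Real.cos (2 * aa g x)|
        ≤ 2 * (g - 1) * (2 / g * Real.exp (-|x|)) * 2 := by
          apply mul_le_mul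
          · exact mul_le_mul_of_nonneg_left hAa (by positivity)
          · exact hs2
          · exact abs_nonneg _
          · positivity
      _ = 4 * (g - 1) * (2 / g * Real.exp (-|x|)) := by ring
  have hsin1 : (Real.sin (r x)) ^ 2 ≤ 1 := Real.sin_sq_le_one _
  have hsin2 : (Real.sin (r x - 3 * Real.pi / 4)) ^ 2 ≤ 1 := Real.sin_sq_le_one _
  have key : |V g r x| ≤ (1 / (2 * g)) * (|H1d g x| + |H2d g x|) := by
    unfold V
    rw [abs_mul, abs_neg, abs_of_nonneg (by positivity : (0:ℝ) ≤ 1 / (2 * g))]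
    apply mul_le_mul_of_nonneg_left _ (by positivity)
    calc |H1d g x * Real.sin (r x) ^ 2 + H2d g x * Real.sin (r x - 3 * Real.pi / 4) ^ 2|
        ≤ |H1d g x * Real.sin (r x) ^ 2| + |H2d g x * Real.sin (r x - 3 * Real.pi / 4) ^ 2| :=
          abs_add_le _ _
      _ ≤ |H1d g x| * 1 + |H2d g x| * 1 := by
          rw [abs_mul, abs_mul]
          gcongr
          · rw [abs_of_nonneg (sq_nonneg _)]; exact hsin1
          · rw [abs_of_nonneg (sq_nonneg _)]; exact hsin2
      _ = |H1d g x| + |H2d g x| := by ring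
  calc |V g r x| ≤ (1 / (2 * g)) * (|H1d g x| + |H2d g x|) := key
    _ ≤ (1 / (2 * g)) * (4 * (g - 1) * (2 / g * Real.exp (-|x|)) +
        4 * (g - 1) * (2 / g * Real.exp (-|x|))) := by
        apply mul_le_mul_of_nonneg_left (add_le_add hH1 hH2) (by positivity)
    _ = 8 * (g - 1) / g ^ 2 * Real.exp (-|x|) := by field_simp; ring

theorem stmt11 (g : ℝ) (hg : g ∈ ({2, 3, 4, 6} : Set ℝ)) (r : ℝ → ℝ)
    (hr : ContDiff ℝ 2 r) (hODE : IsGMSol g 1 r) :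
    Filter.Tendsto (deriv (W g r)) Filter.atTop (nhds 0) ∧
    Filter.Tendsto (deriv (W g r)) Filter.atBot (nhds 0) ∧
    (∃ Lp : ℝ, Filter.Tendsto (W g r) Filter.atTop (nhds Lp)) ∧
    (∃ Lm : ℝ, Filter.Tendsto (W g r) Filter.atBot (nhds Lm)) := by
  have hg2 : (2 : ℝ) ≤ g := by
    rcases hg with h | h | h | h <;> simp_all <;> norm_num
  have hg0 : g ≠ 0 := by linarith
  set K := 8 * (g - 1) / g ^ 2 with hK
  have hK0 : (0 : ℝ) ≤ K := by
    rw [hK]; apply div_nonneg (by nlinarith) (by positivity)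
  have hWd : ∀ x, HasDerivAt (W g r) (V g r x) x := hasDerivAt_W g hg0 r hr hODE
  have hderiv : deriv (W g r) = V g r := funext fun x => (hWd x).deriv
  have hVc : Continuous (V g r) := V_cont g r hr.continuous
  have hVb : ∀ x, |V g r x| ≤ K * Real.exp (-|x|) := V_bound g hg2 r
  -- limits of derivative
  have htop : Tendsto (V g r) atTop (nhds 0) := by
    rw [tendsto_zero_iff_abs_tendsto_zero]
    apply squeeze_zero' (Eventually.of_forall fun x => abs_nonneg _)
      (f := fun x => |V g r x|) (g := fun x => K * Real.exp (-x))
    · filter_upwards [eventually_ge_atTop (0 : ℝ)] with x hx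
      calc |V g r x| ≤ K * Real.exp (-|x|) := hVb x
        _ = K * Real.exp (-x) := by rw [abs_of_nonneg hx]
    · have := Real.tendsto_exp_neg_atTop_nhds_zero.const_mul K
      simpa using this
  have hbot : Tendsto (V g r) atBot (nhds 0) := by
    rw [tendsto_zero_iff_abs_tendsto_zero]
    apply squeeze_zero' (Eventually.of_forall fun x => abs_nonneg _)
      (f := fun x => |V g r x|) (g := fun x => K * Real.exp x)
    · filter_upwards [eventually_le_atBot (0 : ℝ)] with x hx
      calc |V g r x| ≤ K * Real.exp (-|x|) := hVb x
        _ = K * Real.exp x := by rw [abs_of_nonpos hx, neg_neg]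
    · have := Real.tendsto_exp_atBot.const_mul K
      simpa using this
  -- integrability
  have hintTop : IntegrableOn (V g r) (Ioi 0) := by
    apply Integrable.mono' ((exp_neg_integrableOn_Ioi 0 one_pos).const_mul K)
    · exact (hVc.aestronglyMeasurable).restrict
    · rw [ae_restrict_iff' measurableSet_Ioi]
      filter_upwards with x hx
      calc ‖V g r x‖ = |V g r x| := rfl
        _ ≤ K * Real.exp (-|x|) := hVb x
        _ = K * Real.exp (-1 * x) := by rw [abs_of_nonneg (le_of_lt hx)]; norm_num
  have hintBot : IntegrableOn (V g r) (Iic 0) := by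
    apply Integrable.mono' ((integrableOn_exp_Iic 0).const_mul K)
    · exact (hVc.aestronglyMeasurable).restrict
    · rw [ae_restrict_iff' measurableSet_Iic]
      filter_upwards with x hx
      calc ‖V g r x‖ = |V g r x| := rfl
        _ ≤ K * Real.exp (-|x|) := hVb x
        _ = K * Real.exp x := by rw [abs_of_nonpos hx, neg_neg]
  -- FTC
  have hFTC : ∀ x : ℝ, ∫ t in (0 : ℝ)..x, V g r t = W g r x - W g r 0 := fun x =>
    intervalIntegral.integral_eq_sub_of_hasDerivAt (fun t _ => hWd t)
      (hVc.intervalIntegrable 0 x)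
  refine ⟨hderiv ▸ htop, hderiv ▸ hbot, ?_, ?_⟩
  · refine ⟨(∫ t in Ioi (0 : ℝ), V g r t) + W g r 0, ?_⟩
    have h := (intervalIntegral_tendsto_integral_Ioi 0 hintTop tendsto_id).add_const (W g r 0)
    apply h.congr
    intro x
    simp only [id_eq]
    rw [hFTC x]
    ring
  · refine ⟨-(∫ t in Iic (0 : ℝ), V g r t) + W g r 0, ?_⟩
    have h := ((intervalIntegral_tendsto_integral_Iic 0 hintBot tendsto_id).neg).add_const
      (W g r 0)
    apply h.congr
    intro x
    simp only [id_eq]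
    rw [← intervalIntegral.integral_symm, hFTC x]
    ring
end

section
/- Let r solve the (g,1)-ODE and suppose W(−∞) := lim_{x→−∞} W(x) exists and is strictly positive. Then it is not possible that lim_{x→−∞} r'(x) = 0. -/
open Real Filter Topology

theorem stmt13 (g : ℝ) (hg : g ∈ ({2, 3, 4, 6} : Set ℝ)) (r : ℝ → ℝ)
    (hr : ContDiff ℝ 2 r) (hODE : IsGMSol g 1 r) (w : ℝ)
    (hw : Filter.Tendsto (W g r) Filter.atBot (nhds w)) (hwpos : 0 < w) :
    ¬ Filter.Tendsto (deriv r) Filter.atBot (nhds 0) := by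
  intro hder
  have hgpos : 0 < g := by
    rcases hg with h | h | h | h <;> simp_all <;> norm_num
  -- aa tends to 0 at -∞
  have haa : Tendsto (aa g) atBot (nhds 0) := by
    have h1 : Tendsto (fun x => Real.arctan (Real.exp x)) atBot (nhds 0) := by
      have := (Real.continuous_arctan.tendsto 0).comp Real.tendsto_exp_atBot
      simpa [Function.comp_def, Real.arctan_zero] using this
    have := h1.const_mul (2 / g)
    exact (by simpa using this : Tendsto (fun x => 2 / g * Real.arctan (Real.exp x)) atBot (nhds 0))
  have h1t : Tendsto (h1 g) atBot (nhds g) := by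
    have t1 : Tendsto (fun x => (g - 1) * Real.cos (2 * aa g x)) atBot
        (nhds ((g - 1) * Real.cos (2 * 0))) :=
      (((Real.continuous_cos.tendsto _).comp (haa.const_mul 2)).const_mul _)
    have t2 : Tendsto (fun x => Real.cos (2 * (g - 1) * aa g x)) atBot
        (nhds (Real.cos (2 * (g - 1) * 0))) :=
      ((Real.continuous_cos.tendsto _).comp (haa.const_mul (2 * (g - 1))))
    have := t1.add t2
    have heq : (g - 1) * Real.cos (2 * 0) + Real.cos (2 * (g - 1) * 0) = g := by
      simp [Real.cos_zero]
    rw [heq] at this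
    exact this
  have h2t : Tendsto (h2 g) atBot (nhds 0) := by
    have t1 : Tendsto (fun x => -(g - 1) * Real.sin (2 * aa g x)) atBot
        (nhds (-(g - 1) * Real.sin (2 * 0))) :=
      (((Real.continuous_sin.tendsto _).comp (haa.const_mul 2)).const_mul _)
    have t2 : Tendsto (fun x => Real.sin (2 * (g - 1) * aa g x)) atBot
        (nhds (Real.sin (2 * (g - 1) * 0))) :=
      ((Real.continuous_sin.tendsto _).comp (haa.const_mul (2 * (g - 1))))
    have := t1.add t2
    have heq : -(g - 1) * Real.sin (2 * 0) + Real.sin (2 * (g - 1) * 0) = 0 := by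
      simp
    rw [heq] at this
    exact this
  -- F = (1/2)(r')^2 - W tends to -w
  have hF : Tendsto (fun x => (1 / 2) * (deriv r x) ^ 2 - W g r x) atBot (nhds (-w)) := by
    have := ((hder.pow 2).const_mul (1 / 2 : ℝ)).sub hw
    simpa using this
  -- eventual lower bound
  have hev : ∀ᶠ x in atBot, -w / 2 ≤ (1 / 2) * (deriv r x) ^ 2 - W g r x := by
    have e1 : ∀ᶠ x in atBot, (0 : ℝ) ≤ h1 g x :=
      h1t.eventually (eventually_ge_nhds hgpos)
    have e2 : ∀ᶠ x in atBot, |h2 g x| < g * w := by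
      have habs : Tendsto (fun x => |h2 g x|) atBot (nhds 0) := by
        simpa using h2t.abs
      exact habs.eventually (eventually_lt_nhds (by positivity))
    filter_upwards [e1, e2] with x hx1 hx2
    have hs1 : (0 : ℝ) ≤ (Real.sin (r x)) ^ 2 := sq_nonneg _
    have hs1' : (Real.sin (r x)) ^ 2 ≤ 1 := by
      have := Real.neg_one_le_sin (r x)
      have := Real.sin_le_one (r x)
      nlinarith
    have hs2 : (0 : ℝ) ≤ (Real.sin (r x - 3 * Real.pi / 4)) ^ 2 := sq_nonneg _
    have hs2' : (Real.sin (r x - 3 * Real.pi / 4)) ^ 2 ≤ 1 := by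
      have := Real.neg_one_le_sin (r x - 3 * Real.pi / 4)
      have := Real.sin_le_one (r x - 3 * Real.pi / 4)
      nlinarith
    have hab := abs_lt.mp hx2
    have key : (1 / (2 * g)) * h1 g x * (Real.sin (r x)) ^ 2
        + (1 / (2 * g)) * h2 g x * (Real.sin (r x - 3 * Real.pi / 4)) ^ 2 ≥ -w / 2 := by
      have hg2 : (0 : ℝ) < 1 / (2 * g) := by positivity
      have t1 : (0 : ℝ) ≤ (1 / (2 * g)) * h1 g x * (Real.sin (r x)) ^ 2 := by positivity
      have t2 : (1 / (2 * g)) * h2 g x * (Real.sin (r x - 3 * Real.pi / 4)) ^ 2 ≥ -w / 2 := by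
        have hb : h2 g x * (Real.sin (r x - 3 * Real.pi / 4)) ^ 2 ≥ -(g * w) := by
          nlinarith [hab.1, hab.2, hs2, hs2']
        have : (1 / (2 * g)) * (h2 g x * (Real.sin (r x - 3 * Real.pi / 4)) ^ 2)
            ≥ (1 / (2 * g)) * (-(g * w)) := by
          exact mul_le_mul_of_nonneg_left hb (le_of_lt hg2)
        have heq : (1 / (2 * g)) * (-(g * w)) = -w / 2 := by
          field_simp
        linarith [this, heq ▸ this]
      linarith
    have : (1 / 2) * (deriv r x) ^ 2 - W g r x
        = (1 / (2 * g)) * h1 g x * (Real.sin (r x)) ^ 2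
          + (1 / (2 * g)) * h2 g x * (Real.sin (r x - 3 * Real.pi / 4)) ^ 2 := by
      simp [W]; ring
    rw [this]
    exact key
  have hle : -w / 2 ≤ -w := ge_of_tendsto hF hev
  linarith
end

section
/- If r solves the (g,m)-differential equation in the original variable t, namely 2·sin²(gt)·r''(t) + m·g·sin(2gt)·r'(t) − m·g·((g−1)·sin(2(r(t)−t)) + sin(2(r(t)+(g−1)t))) = 0 on (0, π/g), then the change of variable x = log(tan(gt/2)) transforms it into r''(x) = (m−1)·tanh(x)·r'(x) + (m/(2g))·[(g−1)·sin(2r(x)−2a(x)) + sin(2r(x)+2(g−1)·a(x))], where a(x) = (2/g)·arctan(e^x); i.e. if r: (0, π/g) → ℝ solves the t-equation then s(x) := r((2/g)·arctan(e^x)) solves the x-equation. -/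
open Real Filter Topology

lemma sin_two_arctan (y : ℝ) : Real.sin (2 * Real.arctan y) = 2 * y / (1 + y ^ 2) := by
  have h : (0:ℝ) < 1 + y ^ 2 := by positivity
  have hs : Real.sqrt (1 + y ^ 2) ≠ 0 := by positivity
  rw [Real.sin_two_mul, Real.sin_arctan, Real.cos_arctan]
  field_simp
  rw [Real.sq_sqrt h.le]

lemma cos_two_arctan (y : ℝ) : Real.cos (2 * Real.arctan y) = (1 - y ^ 2) / (1 + y ^ 2) := by
  have h : (0:ℝ) < 1 + y ^ 2 := by positivity
  rw [Real.cos_two_mul, Real.cos_arctan, div_pow, one_pow, Real.sq_sqrt h.le]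
  field_simp
  ring

lemma tanh_eq' (x : ℝ) : Real.tanh x = (Real.exp x ^ 2 - 1) / (Real.exp x ^ 2 + 1) := by
  have h := (Real.exp_pos x).ne'
  have h2 : Real.exp x ^ 2 + 1 ≠ 0 := by positivity
  rw [Real.tanh_eq_sinh_div_cosh, Real.sinh_eq, Real.cosh_eq, Real.exp_neg]
  field_simp

lemma hasDerivAt_aa_s17 (g : ℝ) (x : ℝ) :
    HasDerivAt (aa g) (2 / g * (Real.exp x / (1 + Real.exp x ^ 2))) x := by
  have h1 : HasDerivAt (fun x => Real.arctan (Real.exp x))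
      (1 / (1 + Real.exp x ^ 2) * Real.exp x) x :=
    (Real.hasDerivAt_arctan (Real.exp x)).comp x (Real.hasDerivAt_exp x)
  have h2 := h1.const_mul (2 / g)
  show HasDerivAt (fun x => (2 / g) * Real.arctan (Real.exp x)) _ x
  refine h2.congr_deriv ?_
  ring

lemma hasDerivAt_A (g : ℝ) (x : ℝ) :
    HasDerivAt (fun x => 2 / g * (Real.exp x / (1 + Real.exp x ^ 2)))
      (2 / g * ((Real.exp x * (1 + Real.exp x ^ 2) -
        Real.exp x * (2 * Real.exp x ^ 1 * Real.exp x)) / (1 + Real.exp x ^ 2) ^ 2)) x := by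
  have hden : (1 : ℝ) + Real.exp x ^ 2 ≠ 0 := by positivity
  have hd : HasDerivAt (fun x => 1 + Real.exp x ^ 2) (2 * Real.exp x ^ 1 * Real.exp x) x :=
    (((Real.hasDerivAt_exp x).pow 2)).const_add 1
  exact ((Real.hasDerivAt_exp x).div hd hden).const_mul (2 / g)

theorem stmt17 (g m : ℕ) (hg : 1 ≤ g) (hm : 1 ≤ m) (r : ℝ → ℝ)
    (hr : ContDiff ℝ 2 r)
    (hODE : ∀ t ∈ Set.Ioo (0 : ℝ) (Real.pi / g),
      2 * (Real.sin (g * t)) ^ 2 * deriv (deriv r) t +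
        (m : ℝ) * g * Real.sin (2 * g * t) * deriv r t -
        (m : ℝ) * g * (((g : ℝ) - 1) * Real.sin (2 * (r t - t)) +
          Real.sin (2 * (r t + ((g : ℝ) - 1) * t))) = 0) :
    IsGMSol (g : ℝ) (m : ℝ) (fun x => r (aa (g : ℝ) x)) := by
  have hgpos : (0:ℝ) < g := by exact_mod_cast hg
  have hgne : (g:ℝ) ≠ 0 := hgpos.ne'
  have hd1 : Differentiable ℝ r := hr.differentiable (by norm_num)
  have hd2 : Differentiable ℝ (deriv r) := by
    have h : ContDiff ℝ 1 (deriv r) :=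
      (contDiff_succ_iff_deriv.mp (by exact_mod_cast hr : ContDiff ℝ (1+1) r)).2.2
    exact h.differentiable (by norm_num)
  set G : ℝ := (g : ℝ) with hG
  intro x
  set y : ℝ := Real.exp x with hy
  have hy0 : 0 < y := Real.exp_pos x
  have hc : (0:ℝ) < 1 + y ^ 2 := by positivity
  -- derivative of composed function
  have hSd : deriv (fun x => r (aa G x)) = fun x => deriv r (aa G x) * (2 / G * (Real.exp x / (1 + Real.exp x ^ 2))) := by
    funext z
    exact (((hd1 (aa G z)).hasDerivAt.comp z (hasDerivAt_aa_s17 G z))).deriv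
  rw [hSd]
  have hinner : HasDerivAt (fun z => deriv r (aa G z))
      (deriv (deriv r) (aa G x) * (2 / G * (y / (1 + y ^ 2)))) x :=
    (hd2 (aa G x)).hasDerivAt.comp x (hasDerivAt_aa_s17 G x)
  have h2d := (hinner.mul (hasDerivAt_A G x)).deriv
  simp only [Pi.mul_def] at h2d
  rw [h2d]
  -- membership
  have hmem : aa G x ∈ Set.Ioo (0:ℝ) (Real.pi / g) := by
    have h1 : 0 < Real.arctan y := by
      have := Real.arctan_strictMono hy0
      simpa [Real.arctan_zero] using this
    have h2 : Real.arctan y < Real.pi / 2 := Real.arctan_lt_pi_div_two y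
    constructor
    · unfold aa; positivity
    · unfold aa
      rw [div_mul_eq_mul_div, div_lt_div_iff₀ hgpos hgpos]
      nlinarith [Real.pi_pos]
  have key := hODE (aa G x) hmem
  -- rewrite trig terms in key
  have hga : G * aa G x = 2 * Real.arctan y := by unfold aa; field_simp; rfl
  have h2ga : 2 * G * aa G x = 2 * (2 * Real.arctan y) := by rw [mul_assoc, hga]
  rw [h2ga, hga, Real.sin_two_mul (2 * Real.arctan y), sin_two_arctan, cos_two_arctan] at key
  rw [show 2 * (r (aa G x) - aa G x) = 2 * r (aa G x) - 2 * aa G x by ring,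
      show 2 * (r (aa G x) + (G - 1) * aa G x) = 2 * r (aa G x) + 2 * (G - 1) * aa G x by ring] at key
  -- rewrite tanh in goal
  simp only [tanh_eq', ← hy]
  set D1 := deriv r (aa G x) with hD1def
  set D2 := deriv (deriv r) (aa G x) with hD2def
  set S1 := Real.sin (2 * r (aa G x) - 2 * aa G x)
  set S2 := Real.sin (2 * r (aa G x) + 2 * (G - 1) * aa G x)
  have hcn : (1:ℝ) + y ^ 2 ≠ 0 := hc.ne'
  have hyn : y ≠ 0 := hy0.ne'
  have hsne : 2 * (2 * y / (1 + y ^ 2)) ^ 2 ≠ 0 := by positivity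
  have hD2 : D2 = ((m:ℝ) * G * ((G - 1) * S1 + S2)
      - (m:ℝ) * G * (2 * (2 * y / (1 + y ^ 2)) * ((1 - y ^ 2) / (1 + y ^ 2))) * D1)
      / (2 * (2 * y / (1 + y ^ 2)) ^ 2) := by
    rw [eq_div_iff hsne]
    linear_combination key
  rw [hD2]
  field_simp
  ring
end

section
/- Let r solve the symmetric (g,1)-ODE with r point symmetric to (0,(g+1)π/(2g)), and suppose lim_{x→−∞} W(x) < 0. Then there exist k ∈ ℤ and x_0 ∈ ℝ such that (k−1)π < r(x) < kπ for all x ≤ x_0. -/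
open Real Filter Topology

theorem stmt19 (g : ℝ) (hg : g ∈ ({2, 3, 4, 6} : Set ℝ)) (r : ℝ → ℝ)
    (hr : ContDiff ℝ 2 r) (hODE : IsGMSol g 1 r)
    (hsym : ∀ x : ℝ, r (-x) = 2 * ((g + 1) * Real.pi / (2 * g)) - r x)
    (w : ℝ) (hw : Filter.Tendsto (W g r) Filter.atBot (nhds w)) (hwneg : w < 0) :
    ∃ k : ℤ, ∃ x₀ : ℝ, ∀ x : ℝ, x ≤ x₀ →
      ((k : ℝ) - 1) * Real.pi < r x ∧ r x < (k : ℝ) * Real.pi := by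
  have hgpos : 0 < g := by
    rcases hg with h | h | h | h <;> rw [h] at * <;> norm_num
  -- aa tends to 0 at -∞
  have haa : Tendsto (aa g) atBot (nhds 0) := by
    have h1 : Tendsto (fun x : ℝ => Real.arctan (Real.exp x)) atBot (nhds 0) := by
      have := (Real.continuous_arctan.tendsto 0).comp Real.tendsto_exp_atBot
      simpa [Function.comp_def, Real.arctan_zero] using this
    have := h1.const_mul (2 / g)
    rw [mul_zero] at this; exact this
  -- h2 tends to 0 at -∞
  have hh2 : Tendsto (fun x => h2 g x) atBot (nhds 0) := by
    have hc : Continuous (fun t : ℝ =>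
        -(g - 1) * Real.sin (2 * t) + Real.sin (2 * (g - 1) * t)) := by continuity
    have := (hc.tendsto 0).comp haa
    simpa [h2, Function.comp_def] using this
  have hWsmall : ∀ᶠ x in atBot, W g r x < w / 2 :=
    hw.eventually_lt_const (by linarith)
  have h2small : ∀ᶠ x in atBot, |h2 g x| < -w * g := by
    have habs : Tendsto (fun x => |h2 g x|) atBot (nhds 0) := by
      simpa using hh2.abs
    exact habs.eventually_lt_const (by nlinarith)
  obtain ⟨x₀, hx₀⟩ := eventually_atBot.mp (hWsmall.and h2small)
  -- sin (r x) ≠ 0 for x ≤ x₀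
  have hsin : ∀ x ≤ x₀, Real.sin (r x) ≠ 0 := by
    intro x hx hs
    obtain ⟨hW, hh⟩ := hx₀ x hx
    set s := Real.sin (r x - 3 * Real.pi / 4) with hsdef
    have hWx : W g r x = (1 / 2) * (deriv r x) ^ 2 - (1 / (2 * g)) * h2 g x * s ^ 2 := by
      simp [W, hs, ← hsdef]
    have hs2 : s ^ 2 ≤ 1 := by
      have := Real.neg_one_le_sin (r x - 3 * Real.pi / 4)
      have := Real.sin_le_one (r x - 3 * Real.pi / 4)
      nlinarith
    have hs2' : 0 ≤ s ^ 2 := sq_nonneg s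
    have hprod : h2 g x * s ^ 2 < -w * g := by
      have h1 : h2 g x * s ^ 2 ≤ |h2 g x| * s ^ 2 :=
        mul_le_mul_of_nonneg_right (le_abs_self _) hs2'
      have h2' : |h2 g x| * s ^ 2 ≤ |h2 g x| := by
        nlinarith [abs_nonneg (h2 g x)]
      linarith
    have hkey : (1 / (2 * g)) * (h2 g x * s ^ 2) < -w / 2 := by
      have hpos : (0 : ℝ) < 1 / (2 * g) := by positivity
      have := mul_lt_mul_of_pos_left hprod hpos
      have heq : (1 / (2 * g)) * (-w * g) = -w / 2 := by
        field_simp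
      linarith [this.trans_eq heq]
    have hd2 : 0 ≤ (deriv r x) ^ 2 := sq_nonneg _
    rw [hWx] at hW
    nlinarith [hW, hkey, hd2]
  have hπ : (0 : ℝ) < Real.pi := Real.pi_pos
  set k : ℤ := ⌈r x₀ / Real.pi⌉ with hk
  have hne : ∀ (n : ℤ) (x : ℝ), x ≤ x₀ → r x ≠ (n : ℝ) * Real.pi := by
    intro n x hx he
    exact hsin x hx (by rw [he]; exact Real.sin_int_mul_pi n)
  have hupper : r x₀ < (k : ℝ) * Real.pi := by
    have hle : r x₀ / Real.pi ≤ (k : ℝ) := Int.le_ceil _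
    rcases lt_or_eq_of_le hle with h | h
    · exact (div_lt_iff₀ hπ).mp h
    · exact absurd (by field_simp at h; linarith) (hne k x₀ le_rfl)
  have hlower : ((k : ℝ) - 1) * Real.pi < r x₀ := by
    have := Int.ceil_lt_add_one (r x₀ / Real.pi)
    have h' : (k : ℝ) - 1 < r x₀ / Real.pi := by linarith
    calc ((k : ℝ) - 1) * Real.pi < (r x₀ / Real.pi) * Real.pi :=
          mul_lt_mul_of_pos_right h' hπ
      _ = r x₀ := by field_simp
  refine ⟨k, x₀, fun x hx => ⟨?_, ?_⟩⟩
  · by_contra h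
    push_neg at h
    have hmem : ((k : ℝ) - 1) * Real.pi ∈ Set.uIcc (r x) (r x₀) :=
      Set.mem_uIcc.mpr (Or.inl ⟨h, le_of_lt hlower⟩)
    obtain ⟨y, hy, hry⟩ :=
      intermediate_value_uIcc (hr.continuous.continuousOn) hmem
    have hyle : y ≤ x₀ := by
      rcases Set.mem_uIcc.mp hy with ⟨_, h2⟩ | ⟨_, h2⟩
      · exact h2
      · exact le_trans h2 hx
    exact hne (k - 1) y hyle (by push_cast at hry ⊢; linarith)
  · by_contra h
    push_neg at h
    have hmem : (k : ℝ) * Real.pi ∈ Set.uIcc (r x) (r x₀) :=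
      Set.mem_uIcc.mpr (Or.inr ⟨le_of_lt hupper, h⟩)
    obtain ⟨y, hy, hry⟩ :=
      intermediate_value_uIcc (hr.continuous.continuousOn) hmem
    have hyle : y ≤ x₀ := by
      rcases Set.mem_uIcc.mp hy with ⟨_, h2⟩ | ⟨_, h2⟩
      · exact h2
      · exact le_trans h2 hx
    exact hne k y hyle hry
end
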